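/- arXiv:1604.06820 — 7 statements merged into one kernel-verified Lean document; each statement's English description precedes it below -/
import Mathlib

section
/- Let k be a field, let d_1,...,d_n be positive integers, and let f, h ∈ k[x_1,...,x_n]. If h^m · f lies in the ideal (x_1^{d_1},...,x_n^{d_n}), then h^{m+1} · (∂f/∂x_j) lies in the ideal (x_1^{d_1},...,x_{j-1}^{d_{j-1}}, x_j^{d_j - 1}, x_{j+1}^{d_{j+1}},...,x_n^{d_n}), where ∂/∂x_j denotes the formal partial derivative with respect to x_j. -/
open MvPolynomial

/-- If `h^m · f ∈ (x_1^{d_1},...,x_n^{d_n})`, then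
`h^{m+1} · ∂f/∂x_j ∈ (x_1^{d_1},...,x_j^{d_j - 1},...,x_n^{d_n})`. -/
theorem stmt0 {k : Type} [Field k] {n : ℕ} (d : Fin n → ℕ) (hd : ∀ i, 1 ≤ d i)
    (f h : MvPolynomial (Fin n) k) (m : ℕ) (j : Fin n)
    (hmem : h ^ m * f ∈
      Ideal.span (Set.range fun i => (X i : MvPolynomial (Fin n) k) ^ d i)) :
    h ^ (m + 1) * MvPolynomial.pderiv j f ∈
      Ideal.span (Set.range fun i =>
        (X i : MvPolynomial (Fin n) k) ^ (if i = j then d i - 1 else d i)) := by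
  set I : Ideal (MvPolynomial (Fin n) k) :=
    Ideal.span (Set.range fun i =>
      (X i : MvPolynomial (Fin n) k) ^ (if i = j then d i - 1 else d i)) with hI
  have hgen : ∀ i : Fin n,
      (X i : MvPolynomial (Fin n) k) ^ (if i = j then d i - 1 else d i) ∈ I :=
    fun i => Ideal.subset_span ⟨i, rfl⟩
  have hpow : ∀ i : Fin n, (X i : MvPolynomial (Fin n) k) ^ d i ∈ I := by
    intro i
    by_cases hij : i = j
    · have : (X i : MvPolynomial (Fin n) k) ^ d i
          = (X i) ^ (d i - 1) * X i := by
        rw [← pow_succ, Nat.sub_add_cancel (hd i)]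
      rw [this]
      have := hgen i
      rw [if_pos hij] at this
      exact Ideal.mul_mem_right _ _ this
    · have := hgen i
      rw [if_neg hij] at this
      exact this
  -- old ideal is inside I, and is closed under pderiv j into I
  have key : ∀ p ∈ Ideal.span
      (Set.range fun i => (X i : MvPolynomial (Fin n) k) ^ d i),
      p ∈ I ∧ pderiv j p ∈ I := by
    intro p hp
    refine Submodule.span_induction ?_ ?_ ?_ ?_ hp
    · rintro _ ⟨i, rfl⟩
      refine ⟨hpow i, ?_⟩
      rw [pderiv_pow, pderiv_X]
      by_cases hij : i = j
      · subst hij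
        simp only [Pi.single_eq_same]
        have := hgen i
        rw [if_pos rfl] at this
        exact Ideal.mul_mem_right _ _ (Ideal.mul_mem_left _ _ this)
      · rw [Pi.single_eq_of_ne hij]
        simp
    · simp
    · intro a b _ _ ha hb
      exact ⟨I.add_mem ha.1 hb.1, by rw [map_add]; exact I.add_mem ha.2 hb.2⟩
    · intro r x _ hx
      refine ⟨Ideal.mul_mem_left _ _ hx.1, ?_⟩
      rw [smul_eq_mul, pderiv_mul]
      exact I.add_mem (Ideal.mul_mem_left _ _ hx.1) (Ideal.mul_mem_left _ _ hx.2)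
  have hmf : h ^ (m + 1) * f ∈ Ideal.span
      (Set.range fun i => (X i : MvPolynomial (Fin n) k) ^ d i) := by
    rw [pow_succ, mul_comm (h ^ m) h, mul_assoc]
    exact Ideal.mul_mem_left _ _ hmem
  obtain ⟨hmfI, hdI⟩ := key _ hmf
  rw [pderiv_mul, pderiv_pow, Nat.add_sub_cancel] at hdI
  have hterm : (↑(m + 1) * h ^ m * pderiv j h) * f ∈ I := by
    have : (↑(m + 1) * h ^ m * pderiv j h) * f
        = (↑(m + 1) * pderiv j h) * (h ^ m * f) := by ring
    rw [this]
    exact Ideal.mul_mem_left _ _ ((key _ hmem).1)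
  have := I.sub_mem hdI hterm
  simpa using this
end

section
/- Let k be a field of characteristic p > 0 and let A = k[x_1,...,x_n]/(x_1^{d_1},...,x_n^{d_n}). Write d_i = N_i·p + r_i with 0 < r_i ≤ p and let N = N_1 + ... + N_n. For 1 ≤ j ≤ n, set m = N − j + 1. Then for any linear form ℓ = c_1 x_1 + ... + c_n x_n, the product ℓ^{m·p} · x_1^{r_1} x_2^{r_2} ⋯ x_j^{r_j} is zero in A. -/
open MvPolynomial

/-- The monomial complete intersection ideal `(x_1^{d_1}, ..., x_n^{d_n})`. -/
noncomputable def pideal (k : Type) [Field k] {n : ℕ} (d : Fin n → ℕ) :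
    Ideal (MvPolynomial (Fin n) k) :=
  Ideal.span (Set.range fun i => (X i : MvPolynomial (Fin n) k) ^ d i)

/-- The degree-`i` graded component of the quotient `k[x_1,...,x_n]/I`,
viewed as the image of the homogeneous degree-`i` polynomials. -/
noncomputable def qcomp (k : Type) [Field k] {n : ℕ}
    (I : Ideal (MvPolynomial (Fin n) k)) (i : ℕ) :
    Submodule k (MvPolynomial (Fin n) k ⧸ I) :=
  Submodule.map (Ideal.Quotient.mkₐ k I).toLinearMap
    (homogeneousSubmodule (Fin n) k i)

/-- The degree-`i` graded component of `k[x_1,...,x_n]/(x_1^{d_1},...,x_n^{d_n})`. -/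
noncomputable def comp (k : Type) [Field k] {n : ℕ} (d : Fin n → ℕ) (i : ℕ) :
    Submodule k (MvPolynomial (Fin n) k ⧸ pideal k d) :=
  qcomp k (pideal k d) i

/-- Multiplication by `s`, as a map from the subspace `V` to the subspace `W`,
has maximal rank: it is injective or surjective. -/
def maxRankOn {k Q : Type} [Field k] [CommRing Q] [Module k Q]
    (s : Q) (V W : Submodule k Q) : Prop :=
  (∀ f ∈ V, s * f = 0 → f = 0) ∨ (∀ g ∈ W, ∃ f ∈ V, s * f = g)

lemma card_filter_lt {n j : ℕ} (hj2 : j ≤ n) :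
    (Finset.univ.filter fun i : Fin n => (i : ℕ) < j).card = j := by
  have h : (Finset.univ.filter fun i : Fin n => (i : ℕ) < j)
      = (Finset.range j).attachFin
        (fun m hm => lt_of_lt_of_le (Finset.mem_range.mp hm) hj2) := by
    ext i
    simp [Finset.mem_attachFin]
  rw [h, Finset.card_attachFin, Finset.card_range]

lemma pigeon {n p j m : ℕ} (N r : Fin n → ℕ) (hrp : ∀ i, r i ≤ p) (hp0 : 0 < p)
    (hj2 : j ≤ n) (hm : (m : ℤ) = (∑ i, N i : ℕ) - j + 1)
    (a : Fin n → ℕ) (hsum : ∑ i, a i = m) :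
    ∃ i, N i * p + r i ≤ p * a i + (if (i : ℕ) < j then r i else 0) := by
  by_contra hcon
  push_neg at hcon
  have key : ∀ i : Fin n, (a i : ℤ) ≤ (N i : ℤ) - (if (i : ℕ) < j then 1 else 0) := by
    intro i
    have h := hcon i
    by_cases hij : (i : ℕ) < j
    · simp only [hij, if_pos] at h ⊢
      have : p * a i < N i * p := by omega
      have : a i < N i := by
        by_contra hh
        push_neg at hh
        nlinarith
      omega
    · simp only [hij, if_neg, not_false_iff] at h ⊢
      have hri := hrp i
      have : p * a i < (N i + 1) * p := by nlinarith
      have : a i < N i + 1 := by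
        by_contra hh
        push_neg at hh
        nlinarith
      push_cast
      omega
  have hsum' : (m : ℤ) = ∑ i, (a i : ℤ) := by exact_mod_cast hsum.symm
  have hle : (∑ i, (a i : ℤ)) ≤ ∑ i, ((N i : ℤ) - (if (i : ℕ) < j then 1 else 0)) :=
    Finset.sum_le_sum fun i _ => key i
  rw [Finset.sum_sub_distrib] at hle
  have hcnt : (∑ i : Fin n, (if (i : ℕ) < j then (1 : ℤ) else 0))
      = ((Finset.univ.filter fun i : Fin n => (i : ℕ) < j).card : ℤ) := by
    simp [Finset.sum_ite_eq, Finset.sum_boole]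
  rw [hcnt, card_filter_lt hj2] at hle
  have hNZ : (∑ i, (N i : ℤ)) = ((∑ i, N i : ℕ) : ℤ) := by push_cast; ring
  rw [hNZ] at hle
  omega

/-- Lemma on large powers: with `d_i = N_i p + r_i`, `0 < r_i ≤ p`, `N = Σ N_i`,
`1 ≤ j ≤ n` and `m = N - j + 1`, any linear form `ℓ` satisfies
`ℓ^{mp} · x_1^{r_1} ⋯ x_j^{r_j} = 0` in `A`. -/
theorem stmt2 {k : Type} [Field k] {p n : ℕ} (hp : p.Prime) [CharP k p]
    (d N r : Fin n → ℕ) (hdec : ∀ i, d i = N i * p + r i)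
    (hr0 : ∀ i, 0 < r i) (hrp : ∀ i, r i ≤ p)
    (j : ℕ) (hj1 : 1 ≤ j) (hj2 : j ≤ n)
    (m : ℕ) (hm : (m : ℤ) = (∑ i, N i : ℕ) - j + 1)
    (c : Fin n → k) :
    (Ideal.Quotient.mk (pideal k d) (∑ i, C (c i) * X i)) ^ (m * p) *
      Ideal.Quotient.mk (pideal k d)
        (∏ i ∈ Finset.univ.filter (fun i : Fin n => (i : ℕ) < j), X i ^ r i) = 0 := by
  haveI := Fact.mk hp
  rw [← map_pow, ← map_mul, Ideal.Quotient.eq_zero_iff_mem]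
  have hfrob : (∑ i, C (c i) * X i : MvPolynomial (Fin n) k) ^ (m * p)
      = (∑ i : Fin n, ((C (c i))^p * (X i)^p : MvPolynomial (Fin n) k)) ^ m := by
    rw [mul_comm m p, pow_mul, sum_pow_char]
    simp [mul_pow]
  rw [hfrob, Finset.sum_pow_eq_sum_piAntidiag, Finset.sum_mul]
  refine Ideal.sum_mem _ fun a ha => ?_
  rw [Finset.mem_piAntidiag] at ha
  obtain ⟨i0, hi0⟩ := pigeon N r hrp hp.pos hj2 hm a ha.1
  rw [← hdec i0] at hi0
  have hgen : (X i0 : MvPolynomial (Fin n) k) ^ d i0 ∈ pideal k d :=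
    Ideal.subset_span ⟨i0, rfl⟩
  have hdvd : (X i0 : MvPolynomial (Fin n) k) ^ d i0 ∣
      (Nat.multinomial Finset.univ a : MvPolynomial (Fin n) k) *
        (∏ i, ((C (c i))^p * (X i)^p : MvPolynomial (Fin n) k) ^ a i) *
        ∏ i ∈ Finset.univ.filter (fun i : Fin n => (i : ℕ) < j), X i ^ r i := by
    have h1 : (X i0 : MvPolynomial (Fin n) k) ^ (p * a i0) ∣
        ∏ i, ((C (c i))^p * (X i)^p : MvPolynomial (Fin n) k) ^ a i := by
      have hmem := Finset.dvd_prod_of_mem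
        (fun i => ((C (c i))^p * (X i)^p : MvPolynomial (Fin n) k) ^ a i)
        (Finset.mem_univ i0)
      refine dvd_trans ?_ hmem
      show (X i0 : MvPolynomial (Fin n) k) ^ (p * a i0) ∣
        ((C (c i0))^p * (X i0)^p) ^ a i0
      exact ⟨(C (c i0)) ^ (p * a i0), by ring⟩
    by_cases hij : (i0 : ℕ) < j
    · simp only [hij, if_pos] at hi0
      have h2 : (X i0 : MvPolynomial (Fin n) k) ^ r i0 ∣
          ∏ i ∈ Finset.univ.filter (fun i : Fin n => (i : ℕ) < j), X i ^ r i :=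
        Finset.dvd_prod_of_mem _ (by simp [hij])
      calc (X i0 : MvPolynomial (Fin n) k) ^ d i0
          ∣ (X i0) ^ (p * a i0 + r i0) := pow_dvd_pow _ hi0
        _ = (X i0) ^ (p * a i0) * (X i0) ^ r i0 := pow_add _ _ _
        _ ∣ (∏ i, ((C (c i))^p * (X i)^p : MvPolynomial (Fin n) k) ^ a i) *
            ∏ i ∈ Finset.univ.filter (fun i : Fin n => (i : ℕ) < j), X i ^ r i :=
            mul_dvd_mul h1 h2
        _ ∣ _ := mul_dvd_mul (dvd_mul_left _ _) dvd_rfl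
    · simp only [hij, if_neg, not_false_iff, add_zero] at hi0
      calc (X i0 : MvPolynomial (Fin n) k) ^ d i0
          ∣ (X i0) ^ (p * a i0) := pow_dvd_pow _ hi0
        _ ∣ ∏ i, ((C (c i))^p * (X i)^p : MvPolynomial (Fin n) k) ^ a i := h1
        _ ∣ _ := dvd_mul_of_dvd_left (dvd_mul_left _ _) _
  obtain ⟨q, hq⟩ := hdvd
  rw [hq]
  exact Ideal.mul_mem_right _ _ hgen
end

section
/- Let k be any field and A = k[x_1,...,x_n]/(x_1^{d_1},...,x_n^{d_n}) with all d_i ≥ 1, and set t = Σ_{i=1}^n (d_i − 1). If max(d_1,...,d_n) > (t + m)/2 for a positive integer m, then the map A_i → A_{i+m} given by f ↦ f·(x_1 + ... + x_n)^m is injective for all i ≤ (t − m)/2. -/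
/-! Choose `j` with `d j` maximal; the hypotheses give `i + m < d j`. Modulo the ideal, a degree-`i`
representative reduces to a combination `r` of standard monomials (all exponents `u i < d i`).
In `(x_1 + ⋯ + x_n)^m * r`, the monomial `μ` of `r` with the largest `x_j`-exponent contributes
`μ + m e_j` with its own coefficient, since no other product reaches that `x_j`-exponent. As
`μ j + m < d j`, this monomial is again standard, so the product vanishes in `A` only if `r = 0`. -/

open MvPolynomial

namespace MvPolynomial

variable {σ R : Type*} [CommSemiring R]

theorem mem_span_X_pow_iff {d : σ → ℕ} {p : MvPolynomial σ R} :
    p ∈ Ideal.span (Set.range fun i => (X i : MvPolynomial σ R) ^ d i) ↔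
      ∀ u ∈ p.support, ∃ i, d i ≤ u i := by
  have : Set.range (fun i => (X i : MvPolynomial σ R) ^ d i) =
      (fun u => monomial u (1 : R)) '' Set.range fun i => Finsupp.single i (d i) := by
    rw [← Set.range_comp]
    simp [Function.comp_def, X_pow_eq_monomial]
  simp [this, mem_ideal_span_monomial_image, Finsupp.single_le_iff]

theorem exists_eq_add_of_span_X_pow (d : σ → ℕ) (p : MvPolynomial σ R) :
    ∃ q ∈ Ideal.span (Set.range fun i => (X i : MvPolynomial σ R) ^ d i), ∃ r,
      p = q + r ∧ r.support ⊆ p.support ∧ ∀ u ∈ r.support, ∀ i, u i < d i := by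
  classical
  let P : (σ →₀ ℕ) → Prop := fun u => ∀ i, u i < d i
  have support_sum_subset (s : Finset (σ →₀ ℕ)) :
      (∑ u ∈ s, monomial u (coeff u p)).support ⊆ s :=
    support_sum.trans <| Finset.biUnion_subset.2 fun u _ =>
      support_monomial_subset.trans (by simpa)
  refine ⟨∑ u ∈ p.support with ¬P u, monomial u (coeff u p), ?_,
    ∑ u ∈ p.support with P u, monomial u (coeff u p), ?_, ?_, ?_⟩
  · refine Ideal.sum_mem _ fun u hu => mem_span_X_pow_iff.2 fun v hv => ?_
    obtain rfl := Finset.mem_singleton.1 (support_monomial_subset hv)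
    simpa [P] using (Finset.mem_filter.1 hu).2
  · conv_lhs => rw [p.as_sum]
    exact (Finset.sum_filter_not_add_sum_filter _ _ _).symm
  · exact (support_sum_subset _).trans (Finset.filter_subset _ _)
  · exact fun u hu => (Finset.mem_filter.1 (support_sum_subset _ hu)).2

theorem degreeOf_sum_X_pow_mul_le (s : Finset σ) (j : σ) (m : ℕ) (g : MvPolynomial σ R) :
    ((∑ i ∈ s, X i) ^ m * g).degreeOf j ≤ m + g.degreeOf j := by
  classical
  have hX (i : σ) : (X i : MvPolynomial σ R).degreeOf j ≤ 1 := by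
    rw [degreeOf_def]
    refine (Multiset.count_le_of_le j (degrees_X' i)).trans ?_
    rw [Multiset.count_singleton]; split_ifs <;> simp
  have hsum : (∑ i ∈ s, (X i : MvPolynomial σ R)).degreeOf j ≤ 1 :=
    (degreeOf_sum_le _ _ _).trans (Finset.sup_le fun i _ => hX i)
  have hpow := degreeOf_pow_le j (∑ i ∈ s, (X i : MvPolynomial σ R)) m
  have hm : m * (∑ i ∈ s, (X i : MvPolynomial σ R)).degreeOf j ≤ m := by
    simpa using Nat.mul_le_mul_left m hsum
  have hmul := degreeOf_mul_le j ((∑ i ∈ s, X i) ^ m) g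
  omega

variable {s : Finset σ} {j : σ} {g : MvPolynomial σ R} {ν : σ →₀ ℕ}

theorem coeff_add_single_sum_X_mul (hj : j ∈ s) (hg : g.degreeOf j ≤ ν j) :
    coeff (ν + Finsupp.single j 1) ((∑ i ∈ s, X i) * g) = coeff ν g := by
  classical
  rw [Finset.sum_mul, coeff_sum, Finset.sum_eq_single_of_mem j hj, add_comm, coeff_X_mul]
  intro i _ hij
  rw [coeff_X_mul']
  split_ifs
  · refine notMem_support_iff.1 (notMem_support_of_degreeOf_lt j ?_)
    rw [Finsupp.tsub_apply, Finsupp.add_apply, Finsupp.single_eq_same,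
      Finsupp.single_eq_of_ne (Ne.symm hij)]
    omega
  · rfl

theorem coeff_add_single_sum_X_pow_mul (hj : j ∈ s) (hg : g.degreeOf j ≤ ν j) (m : ℕ) :
    coeff (ν + Finsupp.single j m) ((∑ i ∈ s, X i) ^ m * g) = coeff ν g := by
  induction m with
  | zero => simp
  | succ m ih =>
    have hdeg : ((∑ i ∈ s, X i) ^ m * g).degreeOf j ≤ (ν + Finsupp.single j m) j := by
      simpa [add_comm] using (degreeOf_sum_X_pow_mul_le s j m g).trans (by omega)
    rw [Finsupp.single_add, ← add_assoc, pow_succ', mul_assoc,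
      coeff_add_single_sum_X_mul hj hdeg, ih]

theorem eq_zero_of_sum_X_pow_mul_mem_span_X_pow {d : σ → ℕ} {m : ℕ}
    (hg : ∀ u ∈ g.support, ∀ i, u i < d i) (hj : j ∈ s) (hgj : g.degreeOf j + m < d j)
    (hmem : (∑ i ∈ s, X i) ^ m * g ∈
      Ideal.span (Set.range fun i => (X i : MvPolynomial σ R) ^ d i)) :
    g = 0 := by
  by_contra hg0
  obtain ⟨μ, hμ, hμj⟩ := g.support.exists_mem_eq_sup (support_nonempty.2 hg0) (fun u => u j)
  rw [← degreeOf_eq_sup] at hμj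
  have hcoeff := coeff_add_single_sum_X_pow_mul hj hμj.le m
  obtain ⟨i, hi⟩ := mem_span_X_pow_iff.1 hmem (μ + Finsupp.single j m) <| by
    rwa [mem_support_iff, hcoeff, ← mem_support_iff]
  by_cases hij : i = j
  · subst hij
    simp only [Finsupp.add_apply, Finsupp.single_eq_same] at hi
    omega
  · simp only [Finsupp.add_apply, Finsupp.single_eq_of_ne hij, add_zero] at hi
    exact (hg μ hμ i).not_ge hi

end MvPolynomial

theorem stmt4_general {k : Type} [Field k] {n : ℕ}
    (d : Fin n → ℕ) (t : ℕ)
    (m : ℕ) (hm : t + m < 2 * Finset.univ.sup d)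
    (i : ℕ) (hi : 2 * i + m ≤ t) :
    ∀ f ∈ comp k d i,
      (Ideal.Quotient.mk (pideal k d) (∑ j, X j)) ^ m * f = 0 → f = 0 := by
  obtain ⟨j, hj⟩ : ∃ j, i + m < d j := by
    by_contra! h
    have := Finset.sup_le (s := Finset.univ) fun j _ => h j
    omega
  rintro _ ⟨p, hp, rfl⟩ hmul
  obtain ⟨q, hq, r, rfl, hrp, hr⟩ := exists_eq_add_of_span_X_pow d p
  simp only [AlgHom.toLinearMap_apply, Ideal.Quotient.mkₐ_eq_mk, ← map_pow, ← map_mul,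
    Ideal.Quotient.eq_zero_iff_mem] at hmul ⊢
  have hrj : r.degreeOf j ≤ i :=
    (degreeOf_le_totalDegree r j).trans <|
      (totalDegree_le_of_support_subset hrp).trans hp.totalDegree_le
  have hr0 : r = 0 := by
    refine eq_zero_of_sum_X_pow_mul_mem_span_X_pow (m := m) hr (Finset.mem_univ j) (by omega) ?_
    simpa [pideal, mul_add] using Ideal.sub_mem _ hmul (Ideal.mul_mem_left _ ((∑ j, X j) ^ m) hq)
  rwa [hr0, add_zero]

/-- Over any field: if `max(d_1,...,d_n) > (t + m)/2` with `t = Σ (d_i - 1)`,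
then multiplication by `(x_1 + ⋯ + x_n)^m` is injective on `A_i` for `i ≤ (t - m)/2`. -/
theorem stmt4 {k : Type} [Field k] {n : ℕ}
    (d : Fin n → ℕ) (hd : ∀ i, 1 ≤ d i) (t : ℕ) (ht : t = ∑ i, (d i - 1))
    (m : ℕ) (hm0 : 1 ≤ m) (hm : t + m < 2 * Finset.univ.sup d)
    (i : ℕ) (hi : 2 * i + m ≤ t) :
    ∀ f ∈ comp k d i,
      (Ideal.Quotient.mk (pideal k d) (∑ j, X j)) ^ m * f = 0 → f = 0 :=
  stmt4_general d t m hm i hi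
end

section
/- Let k be a field, A = k[x_1,...,x_n]/(x_1^{d_1},...,x_n^{d_n}), t = Σ_{i=1}^n (d_i − 1), and let s be a homogeneous form of degree d in A. Then multiplication by s has maximal rank (injective or surjective) as a map A_i → A_{i+d} for every i if and only if it is injective for all i ≤ (t − d)/2. -/
open MvPolynomial

/-!
The standard monomials `x^a` with `a_j < d_j` form a basis of `A`, so `dim A_i` is the number of
lattice points of the box `∏ [0, d_j - 1]` with coordinate sum `i`; this count is symmetric about
`t/2` and unimodal. Hence `dim A_i ≤ dim A_{i+e}` when `2i + e ≤ t`, and there a surjective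
multiplication map is injective. When `2i + e > t`, the coefficient of the socle monomial
`x^(d-1)` gives perfect pairings `A_j × A_{t-j} → k`, under which multiplication
`A_i → A_{i+e}` is the transpose of multiplication `A_j → A_{j+e}` for `j = t - i - e`; since
`2j + e < t`, injectivity in degree `j` yields surjectivity in degree `i`.
-/

open Finset

section BoxSlice

variable {n : ℕ}

-- Coordinate sums are taken in `ℤ` so that the reflection `i ↦ t - i` is defined for every `i`.
abbrev BoxSlice (d : Fin n → ℕ) (i : ℤ) : Type :=
  {a : (j : Fin n) → Fin (d j) // ∑ j, ((a j : ℕ) : ℤ) = i}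

noncomputable def boxSliceCard (d : Fin n → ℕ) (i : ℤ) : ℕ :=
  Nat.card (BoxSlice d i)

lemma boxSliceCard_of_neg (d : Fin n → ℕ) {i : ℤ} (hi : i < 0) : boxSliceCard d i = 0 := by
  refine Nat.card_eq_zero.mpr (Or.inl ⟨fun a => ?_⟩)
  have : 0 ≤ ∑ j, ((a.1 j : ℕ) : ℤ) := sum_nonneg fun j _ => Int.natCast_nonneg _
  omega

lemma boxSliceCard_symm (d : Fin n → ℕ) (i : ℤ) :
    boxSliceCard d i = boxSliceCard d (∑ j, ((d j : ℤ) - 1) - i) :=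
  Nat.card_congr <| (Equiv.piCongrRight fun j => Fin.revPerm).subtypeEquiv fun a => by
    have hrev : ∀ j, (((a j).rev : ℕ) : ℤ) = d j - 1 - (a j : ℕ) := fun j => by
      have := (a j).isLt
      rw [Fin.val_rev]
      omega
    simp only [Equiv.piCongrRight_apply, Pi.map_apply, Fin.revPerm_apply, hrev, sum_sub_distrib]
    omega

lemma boxSliceCard_succ (d : Fin (n + 1) → ℕ) (i : ℤ) :
    boxSliceCard d i = ∑ c ∈ range (d 0), boxSliceCard (Fin.tail d) (i - c) := by
  let fiber (c : Fin (d 0)) (b : ∀ j : Fin n, Fin (d j.succ)) : Prop :=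
    ∑ j, ((b j : ℕ) : ℤ) = i - (c : ℕ)
  have e : BoxSlice d i ≃ Σ c : Fin (d 0), BoxSlice (Fin.tail d) (i - (c : ℕ)) :=
    ((Fin.consEquiv fun j => Fin (d j)).symm.subtypeEquiv (q := fun p => fiber p.1 p.2)
      fun a => by
        simp only [fiber, Fin.consEquiv, Equiv.coe_fn_symm_mk, Fin.sum_univ_succ, Fin.tail]
        omega).trans
      (Equiv.subtypeProdEquivSigmaSubtype fiber)
  rw [boxSliceCard, Nat.card_congr e, Nat.card_sigma,
    ← Fin.sum_univ_eq_sum_range (fun c => boxSliceCard (Fin.tail d) (i - c))]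
  rfl

lemma le_of_symm_of_le_succ {α : Type*} [Preorder α] {h : ℤ → α} {t : ℤ}
    (symm : ∀ i, h i = h (t - i)) (le_succ : ∀ i, 2 * (i + 1) ≤ t → h i ≤ h (i + 1))
    {i j : ℤ} (hij : i ≤ j) (hijt : i + j ≤ t) : h i ≤ h j := by
  have up : ∀ j, i ≤ j → 2 * j ≤ t → h i ≤ h j := by
    intro j hij
    induction j, hij using Int.leInduction with
    | base => exact fun _ => le_rfl
    | succ j _ ih => exact fun hj => (ih (by omega)).trans (le_succ j hj)
  rcases le_or_gt (2 * j) t with hj | hj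
  · exact up j hij hj
  · rw [symm j]
    exact up _ (by omega) (by omega)

lemma boxSliceCard_le_succ : ∀ {n : ℕ} (d : Fin n → ℕ), (∀ j, 1 ≤ d j) → ∀ i : ℤ,
    2 * (i + 1) ≤ ∑ j, ((d j : ℤ) - 1) → boxSliceCard d i ≤ boxSliceCard d (i + 1)
  | 0, d, _, i, hi => by
    simp only [univ_eq_empty, sum_empty] at hi
    simp [boxSliceCard_of_neg d (by omega : i < 0)]
  | n + 1, d, hd, i, hi => by
    obtain ⟨m, hm⟩ := Nat.exists_eq_add_of_le' (hd 0)
    have hT : ∑ j, ((d j : ℤ) - 1) = m + ∑ j : Fin n, ((d j.succ : ℤ) - 1) := by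
      rw [Fin.sum_univ_succ, hm]
      push_cast
      ring
    -- Splitting off the first coordinate, the two sums agree except for these end terms.
    have hends : boxSliceCard (Fin.tail d) (i - m) ≤ boxSliceCard (Fin.tail d) (i + 1) :=
      le_of_symm_of_le_succ (boxSliceCard_symm _) (boxSliceCard_le_succ _ (fun j => hd _))
        (by omega) (by omega)
    rw [boxSliceCard_succ, boxSliceCard_succ, hm, sum_range_succ, sum_range_succ']
    simp only [Nat.cast_add, Nat.cast_one, Nat.cast_zero, sub_zero]
    have hshift : ∀ c ∈ range m, boxSliceCard (Fin.tail d) (i + 1 - (c + 1)) =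
        boxSliceCard (Fin.tail d) (i - c) := fun c _ => by ring_nf
    rw [sum_congr rfl hshift]
    omega

lemma boxSliceCard_le (d : Fin n → ℕ) (hd : ∀ j, 1 ≤ d j) {i j : ℤ} (hij : i ≤ j)
    (hijt : i + j ≤ ∑ l, ((d l : ℤ) - 1)) : boxSliceCard d i ≤ boxSliceCard d j :=
  le_of_symm_of_le_succ (boxSliceCard_symm d) (boxSliceCard_le_succ d hd) hij hijt

end BoxSlice

section MulRestrict

variable {k Q : Type} [Field k] [CommRing Q] [Algebra k Q] {s : Q} {V W : Submodule k Q}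

def mulRestrict (s : Q) (h : ∀ v ∈ V, s * v ∈ W) : V →ₗ[k] W :=
  (LinearMap.mulLeft k s).restrict h

lemma injective_mulRestrict_iff (h : ∀ v ∈ V, s * v ∈ W) :
    Function.Injective (mulRestrict s h) ↔ ∀ f ∈ V, s * f = 0 → f = 0 := by
  rw [injective_iff_map_eq_zero]
  exact ⟨fun H f hf hsf => congrArg Subtype.val (H ⟨f, hf⟩ (Subtype.ext hsf)),
    fun H x hx => Subtype.ext (H x x.2 (congrArg Subtype.val hx))⟩

lemma surjective_mulRestrict_iff (h : ∀ v ∈ V, s * v ∈ W) :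
    Function.Surjective (mulRestrict s h) ↔ ∀ g ∈ W, ∃ f ∈ V, s * f = g := by
  refine ⟨fun H g hg => ?_, fun H y => ?_⟩
  · obtain ⟨x, hx⟩ := H ⟨g, hg⟩
    exact ⟨x, x.2, congrArg Subtype.val hx⟩
  · obtain ⟨f, hf, hfg⟩ := H y y.2
    exact ⟨⟨f, hf⟩, Subtype.ext hfg⟩

lemma maxRankOn_iff_injective_or_surjective (h : ∀ v ∈ V, s * v ∈ W) :
    maxRankOn s V W ↔
      Function.Injective (mulRestrict s h) ∨ Function.Surjective (mulRestrict s h) := by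
  rw [maxRankOn, injective_mulRestrict_iff, surjective_mulRestrict_iff]

end MulRestrict

section CompleteIntersection

variable {k : Type} [Field k] {n : ℕ} {d : Fin n → ℕ}

local notation "A" => MvPolynomial (Fin n) k ⧸ pideal k d
local notation "mk" => Ideal.Quotient.mk (pideal k d)

lemma mem_pideal_iff {f : MvPolynomial (Fin n) k} :
    f ∈ pideal k d ↔ ∀ a : Fin n →₀ ℕ, (∀ j, a j < d j) → coeff a f = 0 := by
  have hspan : pideal k d = Ideal.span ((fun a => monomial a (1 : k)) ''
      Set.range fun j => Finsupp.single j (d j)) := by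
    rw [pideal, ← Set.range_comp]
    simp only [Function.comp_def, X_pow_eq_monomial]
  rw [hspan, mem_ideal_span_monomial_image]
  simp only [Set.exists_range_iff, Finsupp.single_le_iff, mem_support_iff]
  refine forall_congr' fun a => ?_
  rw [← not_imp_not]
  push Not
  rfl

lemma mem_comp_iff {i : ℕ} {x : A} :
    x ∈ comp k d i ↔ ∃ f : MvPolynomial (Fin n) k, f.IsHomogeneous i ∧ mk f = x := by
  simp [comp, qcomp, mem_homogeneousSubmodule]

lemma mk_monomial_mem_comp {a : Fin n →₀ ℕ} {i : ℕ} (ha : a.degree = i) :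
    mk (monomial a 1) ∈ comp k d i :=
  mem_comp_iff.mpr ⟨_, isHomogeneous_monomial 1 ha, rfl⟩

lemma mul_mem_comp {i j : ℕ} {x y : A} (hx : x ∈ comp k d i) (hy : y ∈ comp k d j) :
    x * y ∈ comp k d (i + j) := by
  obtain ⟨f, hf, rfl⟩ := mem_comp_iff.mp hx
  obtain ⟨g, hg, rfl⟩ := mem_comp_iff.mp hy
  exact mem_comp_iff.mpr ⟨f * g, hf.mul hg, map_mul _ _ _⟩

lemma mul_mem_comp_add {e : ℕ} {s : A} (hs : s ∈ comp k d e) (i : ℕ) :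
    ∀ x ∈ comp k d i, s * x ∈ comp k d (i + e) := fun _ hx => by
  rw [add_comm]
  exact mul_mem_comp hs hx

variable (k d) in
noncomputable def stdCoeff {b : Fin n →₀ ℕ} (hb : ∀ j, b j < d j) : A →ₗ[k] k :=
  (Submodule.liftQ ((pideal k d).restrictScalars k) (lcoeff k b)
      fun _ hf => mem_pideal_iff.mp hf b hb).comp
    (Submodule.Quotient.restrictScalarsEquiv k (pideal k d)).symm.toLinearMap

lemma stdCoeff_mk {b : Fin n →₀ ℕ} (hb : ∀ j, b j < d j) (f : MvPolynomial (Fin n) k) :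
    stdCoeff k d hb (mk f) = coeff b f :=
  rfl

noncomputable def BoxSlice.exp {i : ℤ} (a : BoxSlice d i) : Fin n →₀ ℕ :=
  Finsupp.equivFunOnFinite.symm fun j => a.1 j

lemma BoxSlice.exp_lt {i : ℤ} (a : BoxSlice d i) (j : Fin n) : a.exp j < d j :=
  (a.1 j).isLt

lemma BoxSlice.exp_injective {i : ℤ} : Function.Injective (BoxSlice.exp (d := d) (i := i)) :=
  fun _ _ h => Subtype.ext <| funext fun j => Fin.ext (DFunLike.congr_fun h j)

lemma BoxSlice.degree_exp {i : ℕ} (a : BoxSlice d i) : a.exp.degree = i := by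
  have := a.2
  rw [Finsupp.degree_eq_sum]
  exact_mod_cast this

lemma BoxSlice.exists_exp_eq {i : ℕ} {b : Fin n →₀ ℕ} (hb : ∀ j, b j < d j)
    (hdeg : b.degree = i) : ∃ a : BoxSlice d i, a.exp = b := by
  refine ⟨⟨fun j => ⟨b j, hb j⟩, ?_⟩, Finsupp.ext fun j => rfl⟩
  rw [Finsupp.degree_eq_sum] at hdeg
  exact_mod_cast hdeg

lemma comp_eq_span (i : ℕ) :
    comp k d i = Submodule.span k (Set.range fun a : BoxSlice d i => mk (monomial a.exp 1)) := by
  refine le_antisymm (fun x hx => ?_) (Submodule.span_le.mpr ?_)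
  · obtain ⟨f, hf, rfl⟩ := mem_comp_iff.mp hx
    rw [as_sum f, map_sum]
    refine Submodule.sum_mem _ fun b hb => ?_
    rw [← mul_one (coeff b f), ← smul_eq_mul, ← smul_monomial, ← Ideal.Quotient.mkₐ_eq_mk k,
      map_smul, Ideal.Quotient.mkₐ_eq_mk]
    by_cases hstd : ∀ j, b j < d j
    · obtain ⟨a, rfl⟩ := BoxSlice.exists_exp_eq (i := i) hstd
        (by rw [Finsupp.degree_eq_weight_one]; exact hf (mem_support_iff.mp hb))
      exact Submodule.smul_mem _ _ (Submodule.subset_span ⟨a, rfl⟩)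
    · have hzero : mk (monomial b (1 : k)) = 0 :=
        Ideal.Quotient.eq_zero_iff_mem.mpr <| mem_pideal_iff.mpr fun a ha => by
          rw [coeff_monomial, if_neg (by rintro rfl; exact hstd ha)]
      rw [hzero, smul_zero]
      exact Submodule.zero_mem _
  · rintro _ ⟨a, rfl⟩
    exact mk_monomial_mem_comp a.degree_exp

lemma linearIndependent_mk_monomial (i : ℕ) :
    LinearIndependent k fun a : BoxSlice d i => mk (monomial a.exp 1) := by
  classical
  refine LinearIndependent.of_comp
    (LinearMap.pi fun a : BoxSlice d i => stdCoeff k d a.exp_lt) ?_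
  have hdiag : (LinearMap.pi fun a : BoxSlice d i => stdCoeff k d a.exp_lt) ∘
      (fun a : BoxSlice d i => mk (monomial a.exp 1)) = fun a => Pi.single a 1 := by
    ext a b
    simp [stdCoeff_mk, coeff_monomial, Pi.single_apply, BoxSlice.exp_injective.eq_iff, eq_comm]
  rw [hdiag]
  exact Pi.linearIndependent_single_one _ _

instance (i : ℕ) : FiniteDimensional k (comp k d i) := by
  rw [comp_eq_span]
  exact FiniteDimensional.span_of_finite k (Set.finite_range _)

lemma finrank_comp (i : ℕ) : Module.finrank k (comp k d i) = boxSliceCard d i := by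
  rw [comp_eq_span, finrank_span_eq_card (linearIndependent_mk_monomial i), boxSliceCard,
    Nat.card_eq_fintype_card]

lemma natCast_sum_pred (hd : ∀ j, 1 ≤ d j) :
    ((∑ j, (d j - 1) : ℕ) : ℤ) = ∑ j, ((d j : ℤ) - 1) := by
  push_cast [Nat.cast_sum]
  exact sum_congr rfl fun j _ => by have := hd j; omega

lemma subsingleton_comp_of_lt (hd : ∀ j, 1 ≤ d j) {i : ℕ} (hi : ∑ j, (d j - 1) < i) :
    Subsingleton (comp k d i) := by
  rw [← Module.finrank_zero_iff (R := k), finrank_comp, boxSliceCard_symm]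
  exact boxSliceCard_of_neg d (by rw [← natCast_sum_pred hd]; omega)

variable (d) in
noncomputable def socleExp : Fin n →₀ ℕ :=
  Finsupp.equivFunOnFinite.symm fun j => d j - 1

lemma socleExp_apply (j : Fin n) : socleExp d j = d j - 1 :=
  rfl

lemma degree_socleExp : (socleExp d).degree = ∑ j, (d j - 1) :=
  Finsupp.degree_eq_sum _

lemma le_socleExp_iff (hd : ∀ j, 1 ≤ d j) {a : Fin n →₀ ℕ} :
    a ≤ socleExp d ↔ ∀ j, a j < d j :=
  forall_congr' fun j => by
    have := hd j
    rw [socleExp_apply]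
    omega

lemma coeff_eq_coeff_socleExp_mul {a : Fin n →₀ ℕ} (ha : a ≤ socleExp d)
    (f : MvPolynomial (Fin n) k) :
    coeff a f = coeff (socleExp d) (f * monomial (socleExp d - a) 1) := by
  rw [coeff_mul_monomial', if_pos tsub_le_self, tsub_tsub_cancel_of_le ha, mul_one]

variable (k) in
noncomputable def socleFunctional (hd : ∀ j, 1 ≤ d j) : A →ₗ[k] k :=
  stdCoeff k d ((le_socleExp_iff hd).mp le_rfl)

variable (k) in
noncomputable def socleForm (hd : ∀ j, 1 ≤ d j) (i j : ℕ) :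
    comp k d j →ₗ[k] Module.Dual k (comp k d i) :=
  ((LinearMap.mul k A).compl₁₂ (comp k d j).subtype (comp k d i).subtype).compr₂
    (socleFunctional k hd)

lemma socleForm_apply (hd : ∀ j, 1 ≤ d j) {i j : ℕ} (x : comp k d j) (u : comp k d i) :
    socleForm k hd i j x u = socleFunctional k hd ((x : A) * (u : A)) :=
  rfl

lemma socleForm_injective (hd : ∀ j, 1 ≤ d j) {i j : ℕ} (hij : i + j = ∑ l, (d l - 1)) :
    Function.Injective (socleForm k hd i j) := by
  rw [injective_iff_map_eq_zero]
  rintro ⟨x, hx⟩ hzero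
  obtain ⟨f, hf, rfl⟩ := mem_comp_iff.mp hx
  refine Subtype.ext (Ideal.Quotient.eq_zero_iff_mem.mpr (mem_pideal_iff.mpr fun a ha => ?_))
  have ha' : a ≤ socleExp d := (le_socleExp_iff hd).mpr ha
  by_cases hdeg : a.degree = j
  · have hdeg' : (socleExp d - a).degree = i := by
      have := congrArg Finsupp.degree (tsub_add_cancel_of_le ha')
      rw [map_add, degree_socleExp] at this
      omega
    rw [coeff_eq_coeff_socleExp_mul ha']
    exact LinearMap.congr_fun hzero ⟨_, mk_monomial_mem_comp hdeg'⟩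
  · exact hf.coeff_eq_zero hdeg

lemma socleForm_bijective (hd : ∀ j, 1 ≤ d j) {i j : ℕ} (hij : i + j = ∑ l, (d l - 1)) :
    Function.Bijective (socleForm k hd i j) := by
  refine ⟨socleForm_injective hd hij, (LinearMap.injective_iff_surjective_of_finrank_eq_finrank
    ?_).mp (socleForm_injective hd hij)⟩
  rw [Subspace.dual_finrank_eq, finrank_comp, finrank_comp, boxSliceCard_symm d j,
    ← natCast_sum_pred hd]
  congr 1
  omega

lemma socleForm_comp_mulRestrict (hd : ∀ j, 1 ≤ d j) {e : ℕ} {s : A} (hs : s ∈ comp k d e)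
    (i j : ℕ) :
    socleForm k hd i (j + e) ∘ₗ mulRestrict s (mul_mem_comp_add hs j) =
      (mulRestrict s (mul_mem_comp_add hs i)).dualMap ∘ₗ socleForm k hd (i + e) j := by
  refine LinearMap.ext fun x => LinearMap.ext fun u => ?_
  change socleFunctional k hd (s * x * u) = socleFunctional k hd (x * (s * u))
  rw [mul_left_comm, mul_assoc]

lemma surjective_mulRestrict_of_injective (hd : ∀ j, 1 ≤ d j) {e : ℕ} {s : A}
    (hs : s ∈ comp k d e) {i j : ℕ} (hij : i + e + j = ∑ l, (d l - 1))
    (h : Function.Injective (mulRestrict s (mul_mem_comp_add hs j))) :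
    Function.Surjective (mulRestrict s (mul_mem_comp_add hs i)) := by
  rw [← LinearMap.dualMap_injective_iff]
  have hcomp := congrArg DFunLike.coe (socleForm_comp_mulRestrict hd hs i j)
  rw [LinearMap.coe_comp, LinearMap.coe_comp] at hcomp
  refine Function.Injective.of_comp_right ?_ (socleForm_bijective hd hij).surjective
  rw [← hcomp]
  exact (socleForm_bijective (i := i) (j := j + e) hd (by omega)).injective.comp h

lemma injective_mulRestrict_of_surjective (hd : ∀ j, 1 ≤ d j) {e : ℕ} {s : A}
    (hs : s ∈ comp k d e) {i : ℕ} (hi : 2 * i + e ≤ ∑ l, (d l - 1))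
    (h : Function.Surjective (mulRestrict s (mul_mem_comp_add hs i))) :
    Function.Injective (mulRestrict s (mul_mem_comp_add hs i)) := by
  refine (LinearMap.injective_iff_surjective_of_finrank_eq_finrank
    (le_antisymm ?_ (LinearMap.finrank_le_finrank_of_surjective h))).mpr h
  rw [finrank_comp, finrank_comp]
  exact boxSliceCard_le d hd (by omega) (by rw [← natCast_sum_pred hd]; omega)

end CompleteIntersection

/-- Multiplication by a degree-`e` form `s` has maximal rank `A_i → A_{i+e}` in every
degree if and only if it is injective for all `i ≤ (t - e)/2`. -/
theorem stmt7 {k : Type} [Field k] {n : ℕ}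
    (d : Fin n → ℕ) (hd : ∀ i, 1 ≤ d i) (t : ℕ) (ht : t = ∑ i, (d i - 1))
    (e : ℕ) (S : MvPolynomial (Fin n) k) (hS : S.IsHomogeneous e) :
    (∀ i, maxRankOn (Ideal.Quotient.mk (pideal k d) S)
        (comp k d i) (comp k d (i + e))) ↔
    (∀ i, 2 * i + e ≤ t →
      ∀ f ∈ comp k d i, Ideal.Quotient.mk (pideal k d) S * f = 0 → f = 0) := by
  subst ht
  have hs : Ideal.Quotient.mk (pideal k d) S ∈ comp k d e := mem_comp_iff.mpr ⟨S, hS, rfl⟩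
  simp only [maxRankOn_iff_injective_or_surjective (mul_mem_comp_add hs _),
    ← injective_mulRestrict_iff (mul_mem_comp_add hs _)]
  refine ⟨fun H i hi => (H i).elim id (injective_mulRestrict_of_surjective hd hs hi),
    fun H i => ?_⟩
  by_cases hi : 2 * i + e ≤ ∑ j, (d j - 1)
  · exact Or.inl (H i hi)
  right
  by_cases hie : i + e ≤ ∑ j, (d j - 1)
  · exact surjective_mulRestrict_of_injective hd hs (j := ∑ j, (d j - 1) - i - e) (by omega)
      (H _ (by omega))
  · have := subsingleton_comp_of_lt (k := k) hd (not_le.mp hie)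
    exact Function.surjective_to_subsingleton _
end

section
/- Let k be a field of characteristic p > 0, let n ≥ 1, and let A = k[x_1,...,x_n]/(x_1^{d_1},...,x_n^{d_n}) with all d_i ≥ 2. If Σ_{i=1}^n (d_i − 1) < p, then A has the strong Lefschetz property, with x_1 + ... + x_n as a strong Lefschetz element. -/
/-!
Multiplication `E` by `ℓ = x₁ + ⋯ + xₙ` and the lowering operator `F`, which sends `x^a` to
`∑ⱼ aⱼ (dⱼ - aⱼ) x^(a - eⱼ)`, make `A` an `sl₂`-module on which `[E, F]` acts on `A_i` by
`2i - N`, `N = ∑ (dⱼ - 1)`: it is the tensor product of the `sl₂`-modules `k[xⱼ]/(xⱼ^dⱼ)`.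
The characteristic-zero argument survives as long as `p > N`. Commuting `F` past `E^m` only
produces scalars that are products of integers in `[1, N]`, so a vector of `A_i` killed by `E^m`
with `2i + m ≤ N` is, by induction on `i`, a lowest weight vector, and then it is zero.
Reversing the grading swaps `E` and `F`, so `F^m` is injective in the mirror range; hence
`dim A_i = dim A_(N-i)`, `E^(N-2i) : A_i → A_(N-i)` is bijective, and `E^m` is onto whenever
`2i + m ≥ N` by factoring through it.
-/

open MvPolynomial

/-- `H` acts on `W i` by `2 i - N`. The `W i` need not be independent. -/
structure GradedSl2 (k V : Type*) [Field k] [AddCommGroup V] [Module k V] (N : ℕ) where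
  W : ℕ → Submodule k V
  E : Module.End k V
  F : Module.End k V
  E_mem : ∀ i, ∀ v ∈ W i, E v ∈ W (i + 1)
  F_mem : ∀ i, ∀ v ∈ W (i + 1), F v ∈ W i
  F_eq_zero : ∀ v ∈ W 0, F v = 0
  W_eq_bot : ∀ i, N < i → W i = ⊥
  E_F_sub_F_E : ∀ i, ∀ v ∈ W i, E (F v) - F (E v) = (2 * i - N : k) • v

namespace GradedSl2

variable {k V : Type*} [Field k] [AddCommGroup V] [Module k V] {N : ℕ} (S : GradedSl2 k V N)

theorem E_pow_mem (m : ℕ) {i : ℕ} {v : V} (hv : v ∈ S.W i) : (S.E ^ m) v ∈ S.W (i + m) := by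
  induction m with
  | zero => simpa using hv
  | succ m ih => rw [pow_succ', Module.End.mul_apply, ← add_assoc]; exact S.E_mem _ _ ih

theorem F_E_apply {i : ℕ} {v : V} (hv : v ∈ S.W i) :
    S.F (S.E v) = S.E (S.F v) - (2 * i - N : k) • v := by
  rw [← S.E_F_sub_F_E i v hv, sub_sub_cancel]

theorem F_E_pow_succ (m : ℕ) {i : ℕ} {v : V} (hv : v ∈ S.W i) :
    S.F ((S.E ^ (m + 1)) v) =
      (S.E ^ (m + 1)) (S.F v) - ((m + 1) * (2 * i - N + m) : k) • (S.E ^ m) v := by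
  induction m with
  | zero => simpa using S.F_E_apply hv
  | succ m ih =>
    rw [pow_succ' _ (m + 1), Module.End.mul_apply, S.F_E_apply (S.E_pow_mem _ hv), ih, map_sub,
      map_smul, ← Module.End.mul_apply S.E (S.E ^ (m + 1)),
      ← Module.End.mul_apply S.E (S.E ^ m), ← pow_succ', ← pow_succ', sub_sub, ← add_smul]
    congr 2
    push_cast
    ring

def reverse : GradedSl2 k V N where
  W j := if j ≤ N then S.W (N - j) else ⊥
  E := S.F
  F := S.E
  E_mem j v hv := by
    by_cases h : j + 1 ≤ N
    · rw [if_pos (by omega)] at hv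
      rw [if_pos h]
      exact S.F_mem _ v (by rwa [show N - j = N - (j + 1) + 1 by omega] at hv)
    · rw [if_neg h, Submodule.mem_bot]
      split_ifs at hv
      · exact S.F_eq_zero v (by rwa [show N - j = 0 by omega] at hv)
      · rw [(Submodule.mem_bot k).mp hv, map_zero]
  F_mem j v hv := by
    by_cases h : j + 1 ≤ N
    · rw [if_pos h] at hv
      rw [if_pos (by omega)]
      simpa [show N - (j + 1) + 1 = N - j by omega] using S.E_mem _ v hv
    · rw [if_neg h, Submodule.mem_bot] at hv
      rw [hv, map_zero]
      exact zero_mem _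
  F_eq_zero v hv := by
    simpa [S.W_eq_bot (N + 1) (by omega)] using S.E_mem N v (by simpa using hv)
  W_eq_bot j hj := if_neg (by omega)
  E_F_sub_F_E j v hv := by
    split_ifs at hv with h
    · rw [← neg_sub, S.E_F_sub_F_E _ v hv, ← neg_smul]
      push_cast [Nat.cast_sub h]
      ring_nf
    · simp_all

theorem reverse_W {j : ℕ} (h : j ≤ N) : S.reverse.W j = S.W (N - j) := if_pos h

def E_powRestrict (m i : ℕ) : S.W i →ₗ[k] S.W (i + m) :=
  (S.E ^ m).restrict fun _ hv => S.E_pow_mem m hv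

instance [∀ i, FiniteDimensional k (S.W i)] (j : ℕ) : FiniteDimensional k (S.reverse.W j) := by
  by_cases h : j ≤ N
  · rw [S.reverse_W h]; infer_instance
  · rw [S.reverse.W_eq_bot j (by omega)]; infer_instance

section

variable (hN : ∀ t : ℕ, 0 < t → t ≤ N → (t : k) ≠ 0)
include hN

theorem E_pow_coeff_ne_zero {i m : ℕ} (h : 2 * i + m < N) :
    ((m + 1) * (2 * i - N + m) : k) ≠ 0 := by
  have hweight : (2 * i - N + m : k) = -((N - (2 * i + m) : ℕ) : k) := by
    push_cast [Nat.cast_sub h.le]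
    ring
  rw [hweight, mul_neg, neg_ne_zero]
  exact mul_ne_zero (by exact_mod_cast hN (m + 1) (by omega) (by omega))
    (hN _ (by omega) (Nat.sub_le _ _))

theorem eq_zero_of_F_eq_zero_of_E_pow_eq_zero {i m : ℕ} {v : V} (hv : v ∈ S.W i)
    (hFv : S.F v = 0) (hm : 2 * i + m ≤ N) (hEv : (S.E ^ m) v = 0) : v = 0 := by
  induction m with
  | zero => simpa using hEv
  | succ m ih =>
    have hstring := S.F_E_pow_succ m hv
    rw [hEv, hFv, map_zero, map_zero, zero_sub, eq_comm, neg_eq_zero] at hstring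
    exact ih (by omega) ((smul_eq_zero_iff_right (E_pow_coeff_ne_zero hN (by omega))).mp hstring)

theorem eq_zero_of_E_pow_eq_zero {i m : ℕ} {v : V} (hv : v ∈ S.W i) (hm : 2 * i + m ≤ N)
    (hEv : (S.E ^ m) v = 0) : v = 0 := by
  induction i generalizing m v with
  | zero => exact S.eq_zero_of_F_eq_zero_of_E_pow_eq_zero hN hv (S.F_eq_zero v hv) hm hEv
  | succ i ih =>
    refine S.eq_zero_of_F_eq_zero_of_E_pow_eq_zero hN hv ?_ hm hEv
    -- `F v ∈ W i` is killed by `E ^ (N - 2 i)`, since `E ^ (N - 2 (i + 1))` kills `v`.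
    set M := N - 2 * (i + 1)
    have hEM : (S.E ^ M) v = 0 := Module.End.pow_map_zero_of_le (by omega) hEv
    have hstring := S.F_E_pow_succ (M + 1) hv
    rw [Module.End.pow_map_zero_of_le (by omega) hEM, Module.End.pow_map_zero_of_le (by omega) hEM,
      map_zero, smul_zero, sub_zero, eq_comm] at hstring
    exact ih (S.F_mem i v hv) (by omega) hstring

theorem E_powRestrict_injective {i m : ℕ} (h : 2 * i + m ≤ N) :
    Function.Injective (S.E_powRestrict m i) :=
  (injective_iff_map_eq_zero _).mpr fun v hv =>
    Subtype.ext (S.eq_zero_of_E_pow_eq_zero hN v.2 h (congrArg Subtype.val hv))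

variable [∀ i, FiniteDimensional k (S.W i)]

theorem exists_E_pow_eq_of_two_mul_add_eq {i m : ℕ} (h : 2 * i + m = N) {w : V}
    (hw : w ∈ S.W (i + m)) : ∃ v ∈ S.W i, (S.E ^ m) v = w := by
  have hdual :=
    LinearMap.finrank_le_finrank_of_injective (S.reverse.E_powRestrict_injective hN h.le)
  rw [S.reverse_W (by omega), S.reverse_W (by omega), show N - i = i + m by omega,
    show N - (i + m) = i by omega] at hdual
  have hrank := le_antisymm
    (LinearMap.finrank_le_finrank_of_injective (S.E_powRestrict_injective hN h.le)) hdual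
  obtain ⟨v, hv⟩ := (LinearMap.injective_iff_surjective_of_finrank_eq_finrank hrank).mp
    (S.E_powRestrict_injective hN h.le) ⟨w, hw⟩
  exact ⟨v, v.2, congrArg Subtype.val hv⟩

theorem exists_E_pow_eq {i m : ℕ} (h : N ≤ 2 * i + m) {w : V} (hw : w ∈ S.W (i + m)) :
    ∃ v ∈ S.W i, (S.E ^ m) v = w := by
  rcases lt_or_ge N (i + m) with hlt | hle
  · rw [S.W_eq_bot _ hlt, Submodule.mem_bot] at hw
    exact ⟨0, zero_mem _, by rw [map_zero, hw]⟩
  obtain ⟨u, hu, rfl⟩ := S.exists_E_pow_eq_of_two_mul_add_eq hN (i := N - (i + m))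
    (m := 2 * i + 2 * m - N) (by omega)
    (by rwa [show N - (i + m) + (2 * i + 2 * m - N) = i + m by omega])
  refine ⟨(S.E ^ (2 * i + m - N)) u, ?_, ?_⟩
  · have hu' := S.E_pow_mem (2 * i + m - N) hu
    rwa [show N - (i + m) + (2 * i + m - N) = i by omega] at hu'
  · rw [← Module.End.mul_apply, ← pow_add,
      show m + (2 * i + m - N) = 2 * i + 2 * m - N by omega]

theorem E_pow_injOn_or_surjOn (i m : ℕ) :
    (∀ v ∈ S.W i, (S.E ^ m) v = 0 → v = 0) ∨
      (∀ w ∈ S.W (i + m), ∃ v ∈ S.W i, (S.E ^ m) v = w) :=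
  (le_total (2 * i + m) N).imp (fun h _ hv => S.eq_zero_of_E_pow_eq_zero hN hv h)
    (fun h _ hw => S.exists_E_pow_eq hN h hw)

end

end GradedSl2

theorem homogeneousSubmodule_eq_span_monomial (σ R : Type*) [CommSemiring R] (i : ℕ) :
    homogeneousSubmodule σ R i = Submodule.span R ((monomial · 1) '' {a | a.degree = i}) := by
  rw [homogeneousSubmodule_eq_finsupp_supported, AddMonoidAlgebra.supported_eq_span_single]
  rfl

section MonomialCompleteIntersection

variable (k : Type) [Field k] {n : ℕ} (d : Fin n → ℕ)

/-- This is `a j * (d j - a j)`; writing `d j` as `(d j - 1) + 1` makes the commutator with `X j`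
equal to `2 a j - (d j - 1)` even when `d j = 0`. -/
noncomputable def loweringCoeff (j : Fin n) (a : Fin n →₀ ℕ) : k :=
  (a j : k) * ((d j - 1 : ℕ) + 1 - a j)

noncomputable def partialLowering (j : Fin n) : Module.End k (MvPolynomial (Fin n) k) :=
  (basisMonomials (Fin n) k).constr k fun a =>
    loweringCoeff k d j a • monomial (a - Finsupp.single j 1) 1

noncomputable def lowering : Module.End k (MvPolynomial (Fin n) k) :=
  ∑ j, partialLowering k d j

variable {k}

theorem loweringCoeff_of_eq_zero {j : Fin n} {a : Fin n →₀ ℕ} (h : a j = 0) :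
    loweringCoeff k d j a = 0 := by
  simp [loweringCoeff, h]

theorem loweringCoeff_of_eq {j : Fin n} {a : Fin n →₀ ℕ} (h : a j = d j) :
    loweringCoeff k d j a = 0 := by
  rw [loweringCoeff, h]
  cases d j <;> simp

theorem loweringCoeff_single_add_of_ne {j l : Fin n} (h : l ≠ j) (a : Fin n →₀ ℕ) :
    loweringCoeff k d j (Finsupp.single l 1 + a) = loweringCoeff k d j a := by
  simp [loweringCoeff, h]

theorem loweringCoeff_sub_loweringCoeff_single_add (j : Fin n) (a : Fin n →₀ ℕ) :
    loweringCoeff k d j a - loweringCoeff k d j (Finsupp.single j 1 + a) =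
      2 * a j - (d j - 1 : ℕ) := by
  simp only [loweringCoeff, Finsupp.add_apply, Finsupp.single_eq_same]
  push_cast
  ring

theorem partialLowering_monomial (j : Fin n) (a : Fin n →₀ ℕ) :
    partialLowering k d j (monomial a (1 : k)) =
      loweringCoeff k d j a • monomial (a - Finsupp.single j 1) 1 := by
  have h := (basisMonomials (Fin n) k).constr_basis k
    (fun a => loweringCoeff k d j a • monomial (a - Finsupp.single j 1) (1 : k)) a
  rwa [coe_basisMonomials] at h

theorem partialLowering_monomial_of_eq_zero {j : Fin n} {a : Fin n →₀ ℕ} (h : a j = 0) :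
    partialLowering k d j (monomial a 1) = 0 := by
  rw [partialLowering_monomial, loweringCoeff_of_eq_zero d h, zero_smul]

theorem X_mul_monomial_one (j : Fin n) (a : Fin n →₀ ℕ) :
    X j * monomial a (1 : k) = monomial (Finsupp.single j 1 + a) 1 := by
  rw [monomial_single_add, pow_one]

theorem X_mul_partialLowering_monomial (j : Fin n) (a : Fin n →₀ ℕ) :
    X j * partialLowering k d j (monomial a (1 : k)) = loweringCoeff k d j a • monomial a 1 := by
  rw [partialLowering_monomial, mul_smul_comm, X_mul_monomial_one]
  rcases Nat.eq_zero_or_pos (a j) with h | h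
  · rw [loweringCoeff_of_eq_zero d h, zero_smul, zero_smul]
  · rw [add_tsub_cancel_of_le (Finsupp.single_le_iff.mpr h)]

theorem X_mul_partialLowering_monomial_of_ne {j l : Fin n} (h : l ≠ j) (a : Fin n →₀ ℕ) :
    X l * partialLowering k d j (monomial a (1 : k)) =
      partialLowering k d j (X l * monomial a 1) := by
  rw [partialLowering_monomial, mul_smul_comm, X_mul_monomial_one, X_mul_monomial_one,
    partialLowering_monomial, loweringCoeff_single_add_of_ne d h]
  congr 3
  ext x
  simp only [Finsupp.add_apply, Finsupp.tsub_apply, Finsupp.single_apply]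
  split_ifs <;> omega

theorem X_mul_partialLowering_monomial_sub (j : Fin n) (a : Fin n →₀ ℕ) :
    X j * partialLowering k d j (monomial a (1 : k)) - partialLowering k d j (X j * monomial a 1) =
      (2 * a j - (d j - 1 : ℕ) : k) • monomial a 1 := by
  rw [X_mul_partialLowering_monomial, X_mul_monomial_one, partialLowering_monomial,
    add_tsub_cancel_left, ← sub_smul, loweringCoeff_sub_loweringCoeff_single_add]

theorem sum_X_mul_lowering_monomial_sub (a : Fin n →₀ ℕ) :
    (∑ l, X l) * lowering k d (monomial a 1) - lowering k d ((∑ l, X l) * monomial a 1) =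
      (2 * a.degree - ∑ j, (d j - 1 : ℕ) : k) • monomial a 1 := by
  have hdiag : ∀ j, ∑ l, (X l * partialLowering k d j (monomial a 1) -
      partialLowering k d j (X l * monomial a 1)) =
        (2 * a j - (d j - 1 : ℕ) : k) • monomial a 1 := by
    intro j
    rw [Finset.sum_eq_single j (fun l _ hl => by rw [X_mul_partialLowering_monomial_of_ne d hl,
      sub_self]) (by simp), X_mul_partialLowering_monomial_sub]
  have hℓF : (∑ l, X l) * lowering k d (monomial a (1 : k)) =
      ∑ j, ∑ l, X l * partialLowering k d j (monomial a 1) := by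
    simp only [lowering, LinearMap.sum_apply, Finset.mul_sum, Finset.sum_mul]
  have hFℓ : lowering k d ((∑ l, X l) * monomial a (1 : k)) =
      ∑ j, ∑ l, partialLowering k d j (X l * monomial a 1) := by
    simp only [lowering, LinearMap.sum_apply, Finset.sum_mul, map_sum]
    exact Finset.sum_comm
  rw [hℓF, hFℓ, ← Finset.sum_sub_distrib]
  simp only [← Finset.sum_sub_distrib, hdiag, ← Finset.sum_smul, Finsupp.degree_eq_sum]
  push_cast [Finset.mul_sum]
  rw [Finset.sum_sub_distrib]

theorem restrictScalars_pideal :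
    (pideal k d).restrictScalars k = restrictSupport k {a | ∃ j, d j ≤ a j} := by
  ext f
  have hgen : Set.range (fun j => (X j : MvPolynomial (Fin n) k) ^ d j) =
      (monomial · 1) '' Set.range (fun j => Finsupp.single j (d j)) := by
    rw [← Set.range_comp]
    simp [X_pow_eq_monomial, Function.comp_def]
  rw [Submodule.restrictScalars_mem, pideal, hgen, mem_ideal_span_monomial_image,
    mem_restrictSupport_iff]
  simp [Set.subset_def, Finsupp.single_le_iff]

theorem lowering_mem_pideal {f : MvPolynomial (Fin n) k} (hf : f ∈ pideal k d) :
    lowering k d f ∈ pideal k d := by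
  rw [← Submodule.restrictScalars_mem k, restrictScalars_pideal, restrictSupport_eq_span]
    at hf ⊢
  refine (Submodule.span_le (p := (Submodule.span k _).comap (lowering k d))).mpr ?_ hf
  rintro _ ⟨a, ⟨j, hj⟩, rfl⟩
  rw [SetLike.mem_coe, Submodule.mem_comap, lowering, LinearMap.sum_apply]
  refine Submodule.sum_mem _ fun l _ => ?_
  rw [partialLowering_monomial]
  by_cases hc : loweringCoeff k d l a = 0
  · rw [hc, zero_smul]
    exact zero_mem _
  refine Submodule.smul_mem _ _ (Submodule.subset_span ⟨_, ⟨j, ?_⟩, rfl⟩)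
  rw [Finsupp.tsub_apply, Finsupp.single_apply]
  split_ifs with hlj
  · subst hlj
    have : a l ≠ d l := fun h => hc (loweringCoeff_of_eq d h)
    omega
  · omega

theorem sum_X_mul_lowering_sub {i : ℕ} {f : MvPolynomial (Fin n) k}
    (hf : f ∈ homogeneousSubmodule (Fin n) k i) :
    (∑ l, X l) * lowering k d f - lowering k d ((∑ l, X l) * f) =
      (2 * i - ∑ j, (d j - 1 : ℕ) : k) • f := by
  rw [homogeneousSubmodule_eq_span_monomial] at hf
  refine LinearMap.eqOn_span (R := k)
    (f := LinearMap.mulLeft k (∑ l, X l) * lowering k d -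
      lowering k d * LinearMap.mulLeft k (∑ l, X l))
    (g := (2 * i - ∑ j, (d j - 1 : ℕ) : k) • LinearMap.id) ?_ hf
  rintro _ ⟨a, rfl, rfl⟩
  simpa using sum_X_mul_lowering_monomial_sub (k := k) d a

theorem lowering_mem_homogeneousSubmodule {i : ℕ} {f : MvPolynomial (Fin n) k}
    (hf : f ∈ homogeneousSubmodule (Fin n) k (i + 1)) :
    lowering k d f ∈ homogeneousSubmodule (Fin n) k i := by
  rw [homogeneousSubmodule_eq_span_monomial] at hf
  refine (Submodule.span_le (p := (homogeneousSubmodule (Fin n) k i).comap (lowering k d))).mpr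
    ?_ hf
  rintro _ ⟨a, (ha : a.degree = i + 1), rfl⟩
  rw [SetLike.mem_coe, Submodule.mem_comap, lowering, LinearMap.sum_apply]
  refine Submodule.sum_mem _ fun j _ => ?_
  rcases Nat.eq_zero_or_pos (a j) with h | h
  · rw [partialLowering_monomial_of_eq_zero d h]
    exact zero_mem _
  rw [partialLowering_monomial]
  refine Submodule.smul_mem _ _ (isHomogeneous_monomial _ ?_)
  have := congrArg Finsupp.degree
    (tsub_add_cancel_of_le (Finsupp.single_le_iff.mpr h : Finsupp.single j 1 ≤ a))
  rw [map_add, Finsupp.degree_single] at this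
  omega

theorem lowering_eq_zero_of_mem_homogeneousSubmodule_zero {f : MvPolynomial (Fin n) k}
    (hf : f ∈ homogeneousSubmodule (Fin n) k 0) : lowering k d f = 0 := by
  rw [homogeneousSubmodule_eq_span_monomial] at hf
  refine (Submodule.span_le (p := LinearMap.ker (lowering k d))).mpr ?_ hf
  rintro _ ⟨a, (ha : a.degree = 0), rfl⟩
  rw [Finsupp.degree_eq_zero_iff] at ha
  rw [SetLike.mem_coe, LinearMap.mem_ker, lowering, LinearMap.sum_apply, ha]
  exact Finset.sum_eq_zero fun j _ => partialLowering_monomial_of_eq_zero d rfl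

theorem homogeneousSubmodule_le_pideal {i : ℕ} (h : ∑ j, (d j - 1) < i) :
    homogeneousSubmodule (Fin n) k i ≤ (pideal k d).restrictScalars k := by
  rw [homogeneousSubmodule_eq_span_monomial, restrictScalars_pideal, restrictSupport_eq_span]
  refine Submodule.span_mono (Set.image_mono fun a (ha : a.degree = i) => ?_)
  show ∃ j, d j ≤ a j
  by_contra! hlt
  have : a.degree ≤ ∑ j, (d j - 1) := by
    rw [Finsupp.degree_eq_sum]
    exact Finset.sum_le_sum fun j _ => Nat.le_sub_one_of_lt (hlt j)
  omega

variable (k)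

noncomputable def quotLowering : Module.End k (MvPolynomial (Fin n) k ⧸ pideal k d) :=
  (Submodule.Quotient.restrictScalarsEquiv k (pideal k d)).toLinearMap ∘ₗ
    ((pideal k d).restrictScalars k).mapQ _ (lowering k d) (fun _ => lowering_mem_pideal d) ∘ₗ
    (Submodule.Quotient.restrictScalarsEquiv k (pideal k d)).symm.toLinearMap

variable {k}

theorem quotLowering_mk (f : MvPolynomial (Fin n) k) :
    quotLowering k d (Ideal.Quotient.mk _ f) = Ideal.Quotient.mk _ (lowering k d f) :=
  rfl

theorem mem_comp {i : ℕ} {v : MvPolynomial (Fin n) k ⧸ pideal k d} :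
    v ∈ comp k d i ↔ ∃ f ∈ homogeneousSubmodule (Fin n) k i, Ideal.Quotient.mk _ f = v :=
  Submodule.mem_map

variable (k)

noncomputable def pidealGradedSl2 :
    GradedSl2 k (MvPolynomial (Fin n) k ⧸ pideal k d) (∑ j, (d j - 1)) where
  W := comp k d
  E := LinearMap.mulLeft k (Ideal.Quotient.mk _ (∑ j, X j))
  F := quotLowering k d
  E_mem i v hv := by
    obtain ⟨f, hf, rfl⟩ := (mem_comp d).mp hv
    refine (mem_comp d).mpr ⟨(∑ j, X j) * f, ?_, by simp⟩
    rw [add_comm]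
    exact (IsHomogeneous.sum _ _ _ fun j _ => isHomogeneous_X k j).mul hf
  F_mem i v hv := by
    obtain ⟨f, hf, rfl⟩ := (mem_comp d).mp hv
    exact (mem_comp d).mpr ⟨_, lowering_mem_homogeneousSubmodule d hf, rfl⟩
  F_eq_zero v hv := by
    obtain ⟨f, hf, rfl⟩ := (mem_comp d).mp hv
    rw [quotLowering_mk, lowering_eq_zero_of_mem_homogeneousSubmodule_zero d hf, map_zero]
  W_eq_bot i hi := by
    refine (Submodule.eq_bot_iff _).mpr fun v hv => ?_
    obtain ⟨f, hf, rfl⟩ := (mem_comp d).mp hv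
    exact Ideal.Quotient.eq_zero_iff_mem.mpr (homogeneousSubmodule_le_pideal d hi hf)
  E_F_sub_F_E i v hv := by
    obtain ⟨f, hf, rfl⟩ := (mem_comp d).mp hv
    simp only [LinearMap.mulLeft_apply, quotLowering_mk, ← map_mul, ← map_sub,
      sum_X_mul_lowering_sub d hf]
    push_cast
    exact map_smul (Ideal.Quotient.mkₐ k (pideal k d)) _ f

instance (i : ℕ) : FiniteDimensional k ((pidealGradedSl2 k d).W i) :=
  Module.Finite.iff_fg.mpr ((homogeneousSubmodule_fg _ _ i).map _)

end MonomialCompleteIntersection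

theorem stmt9_general {k : Type} [Field k] {p n : ℕ} [CharP k p]
    (d : Fin n → ℕ) (ht : ∑ i, (d i - 1) < p) :
    ∀ m, 1 ≤ m → ∀ i,
      maxRankOn ((Ideal.Quotient.mk (pideal k d) (∑ j, X j)) ^ m)
        (comp k d i) (comp k d (i + m)) := by
  intro m _ i
  have hN : ∀ t : ℕ, 0 < t → t ≤ ∑ j, (d j - 1) → (t : k) ≠ 0 := fun t ht0 htN h =>
    absurd (Nat.le_of_dvd ht0 ((CharP.cast_eq_zero_iff k p t).mp h)) (by omega)
  simpa [maxRankOn, pidealGradedSl2, LinearMap.pow_mulLeft] using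
    (pidealGradedSl2 k d).E_pow_injOn_or_surjOn hN i m

/-- If `Σ (d_i - 1) < p`, then `A` has the strong Lefschetz property with
`x_1 + ⋯ + x_n` as a strong Lefschetz element. -/
theorem stmt9 {k : Type} [Field k] {p n : ℕ} (hp : p.Prime) [CharP k p]
    (hn : 1 ≤ n) (d : Fin n → ℕ) (hd : ∀ i, 2 ≤ d i)
    (ht : ∑ i, (d i - 1) < p) :
    ∀ m, 1 ≤ m → ∀ i,
      maxRankOn ((Ideal.Quotient.mk (pideal k d) (∑ j, X j)) ^ m)
        (comp k d i) (comp k d (i + m)) :=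
  stmt9_general d ht
end

section
/- Let k be a field of characteristic p > 0 and A = k[x_1,...,x_n]/(x_1^{d_1},...,x_n^{d_n}). Write d_i = N_i·p + r_i with 0 < r_i ≤ p. Let Λ ⊆ {1,...,n} be a set of indices with d_i > r_i for all i ∈ Λ, and let m = Σ_{i=1}^n N_i − |Λ| + 1. If Σ_{i∈Λ} r_i ≤ (Σ_{i=1}^n (d_i − 1) − m·p)/2, then A does not have the strong Lefschetz property. -/
open MvPolynomial

/-! ### Auxiliary lemmas -/

lemma aux_degree_fin {n : ℕ} (f : Fin n →₀ ℕ) : f.degree = ∑ i, f i := by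
  rw [Finsupp.degree]
  refine Finset.sum_subset (Finset.subset_univ _) fun x _ hx => ?_
  simpa [Finsupp.mem_support_iff] using hx

@[simp] lemma aux_symm_apply {n : ℕ} (g : Fin n → ℕ) (i : Fin n) :
    (Finsupp.equivFunOnFinite.symm g) i = g i := rfl

lemma aux_symm_add {n : ℕ} (g h : Fin n → ℕ) :
    Finsupp.equivFunOnFinite.symm g + Finsupp.equivFunOnFinite.symm h
      = Finsupp.equivFunOnFinite.symm (fun i => g i + h i) := by
  ext i
  simp [Finsupp.add_apply]

lemma coeff_eq_zero_of_mem_pideal {k : Type} [Field k] {n : ℕ} {d : Fin n → ℕ}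
    {c : Fin n →₀ ℕ} (hc : ∀ i, c i < d i) {g : MvPolynomial (Fin n) k}
    (hg : g ∈ pideal k d) : coeff c g = 0 := by
  rw [pideal, Ideal.mem_span_range_iff_exists_fun] at hg
  obtain ⟨h, rfl⟩ := hg
  rw [MvPolynomial.coeff_sum]
  refine Finset.sum_eq_zero fun i _ => ?_
  rw [X_pow_eq_monomial, coeff_mul_monomial', if_neg]
  intro hle
  exact absurd (Finsupp.single_le_iff.1 hle) (Nat.not_le.2 (hc i))

lemma monomial_mem_pideal {k : Type} [Field k] {n : ℕ} {d : Fin n → ℕ} {u : Fin n →₀ ℕ}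
    (c : k) {i : Fin n} (h : d i ≤ u i) : monomial u c ∈ pideal k d := by
  have : monomial u c = monomial (u - Finsupp.single i (d i)) c * (X i ^ d i) := by
    rw [X_pow_eq_monomial, monomial_mul, mul_one,
      tsub_add_cancel_of_le (Finsupp.single_le_iff.2 h)]
  rw [this]
  exact Ideal.mul_mem_left _ _ (Ideal.subset_span ⟨i, rfl⟩)

lemma exists_fill {n : ℕ} (cap : Fin n → ℕ) : ∀ T, T ≤ ∑ i, cap i →
    ∃ w : Fin n → ℕ, (∀ i, w i ≤ cap i) ∧ ∑ i, w i = T := by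
  intro T
  induction T with
  | zero => exact fun _ => ⟨0, fun i => Nat.zero_le _, by simp⟩
  | succ t ih =>
    intro hT
    obtain ⟨w, hw, hsum⟩ := ih (Nat.le_of_succ_le hT)
    have : ∃ i, w i < cap i := by
      by_contra hcon
      push_neg at hcon
      have : ∑ i, cap i ≤ ∑ i, w i := Finset.sum_le_sum fun i _ => hcon i
      omega
    obtain ⟨i, hi⟩ := this
    refine ⟨Function.update w i (w i + 1), fun j => ?_, ?_⟩
    · rcases eq_or_ne j i with rfl | hji
      · simp; omega
      · simp [Function.update_of_ne hji, hw j]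
    · rw [Finset.sum_update_of_mem (Finset.mem_univ i), Finset.sdiff_singleton_eq_erase]
      have := Finset.add_sum_erase Finset.univ w (Finset.mem_univ i)
      omega

lemma prod_monomial {R : Type*} [CommSemiring R] {σ ι : Type*} (s : Finset ι)
    (u : ι → σ →₀ ℕ) (c : ι → R) :
    ∏ i ∈ s, monomial (u i) (c i) = monomial (∑ i ∈ s, u i) (∏ i ∈ s, c i) := by
  induction s using Finset.cons_induction with
  | empty => simp
  | cons a s ha ih => rw [Finset.prod_cons, ih, monomial_mul, Finset.sum_cons, Finset.prod_cons]

/-- Key algebraic fact: `L^{mp} · ∏_{i∈Λ} x_i^{r_i}` lies in the ideal. -/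
lemma key_pow_mul_mem {k : Type} [Field k] {p n : ℕ} (hp : p.Prime) [CharP k p]
    {d N r : Fin n → ℕ} (hdec : ∀ i, d i = N i * p + r i)
    (hrp : ∀ i, r i ≤ p) {Λ : Finset (Fin n)}
    {m : ℕ} (hmn : m + Λ.card = (∑ i, N i) + 1)
    {L : MvPolynomial (Fin n) k} (hL : L.IsHomogeneous 1) :
    L ^ (m * p) *
      monomial (Finsupp.equivFunOnFinite.symm fun i => if i ∈ Λ then r i else 0) 1
      ∈ pideal k d := by
  classical
  haveI := Fact.mk hp
  have hLp : L ^ p = ∑ β ∈ L.support, monomial (p • β) (coeff β L ^ p) := by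
    conv_lhs => rw [L.as_sum]
    rw [sum_pow_char]
    exact Finset.sum_congr rfl fun β _ => by rw [monomial_pow]
  rw [mul_comm m p, pow_mul, hLp, Finset.sum_pow_eq_sum_piAntidiag, Finset.sum_mul]
  refine Ideal.sum_mem _ fun kf hkf => ?_
  rw [Finset.mem_piAntidiag] at hkf
  obtain ⟨hsum, -⟩ := hkf
  have hterm : ∏ β ∈ L.support, (monomial (p • β) (coeff β L ^ p)) ^ kf β
      = monomial (∑ β ∈ L.support, kf β • (p • β))
          (∏ β ∈ L.support, (coeff β L ^ p) ^ kf β) := by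
    rw [← prod_monomial]
    exact Finset.prod_congr rfl fun β _ => by rw [monomial_pow]
  set α : Fin n → ℕ := fun i => ∑ β ∈ L.support, kf β * β i with hα
  have hu : ∀ i, (∑ β ∈ L.support, kf β • (p • β)) i = p * α i := by
    intro i
    rw [Finset.sum_apply', hα, Finset.mul_sum]
    exact Finset.sum_congr rfl fun β _ => by
      simp [Finsupp.smul_apply, mul_comm, mul_left_comm]
  have hβdeg : ∀ β ∈ L.support, ∑ i, β i = 1 := by
    intro β hβ
    have := hL (mem_support_iff.mp hβ)
    rw [← aux_degree_fin, Finsupp.degree_eq_weight_one]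
    exact this
  have hαsum : ∑ i, α i = m := by
    rw [hα, Finset.sum_comm, ← hsum]
    refine Finset.sum_congr rfl fun β hβ => ?_
    rw [← Finset.mul_sum, hβdeg β hβ, mul_one]
  have hj : ∃ j, d j ≤ p * α j + (if j ∈ Λ then r j else 0) := by
    by_contra hcon
    push_neg at hcon
    have h1 : ∀ j, α j ≤ N j := by
      intro j
      have h2 := hcon j
      rw [hdec j] at h2
      have h3 := hrp j
      have hlt : α j * p < (N j + 1) * p := by
        calc α j * p = p * α j := mul_comm _ _
          _ ≤ p * α j + (if j ∈ Λ then r j else 0) := Nat.le_add_right _ _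
          _ < N j * p + r j := h2
          _ ≤ N j * p + p := by omega
          _ = (N j + 1) * p := by ring
      exact Nat.lt_succ_iff.mp (Nat.lt_of_mul_lt_mul_right hlt)
    have h2 : ∀ j ∈ Λ, α j + 1 ≤ N j := by
      intro j hjΛ
      have h2 := hcon j
      rw [hdec j, if_pos hjΛ] at h2
      have hlt : α j * p < N j * p := by
        rw [mul_comm (α j) p]
        omega
      exact Nat.lt_of_mul_lt_mul_right hlt
    have hsplit := Finset.sum_add_sum_compl Λ α
    have hsplitN := Finset.sum_add_sum_compl Λ N
    have hΛα : ∑ j ∈ Λ, α j + Λ.card ≤ ∑ j ∈ Λ, N j := by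
      have := Finset.sum_le_sum h2
      rw [Finset.sum_add_distrib, Finset.sum_const, smul_eq_mul, mul_one] at this
      exact this
    have hcα : ∑ j ∈ Λᶜ, α j ≤ ∑ j ∈ Λᶜ, N j :=
      Finset.sum_le_sum fun j _ => h1 j
    omega
  obtain ⟨j, hj⟩ := hj
  rw [mul_assoc]
  refine Ideal.mul_mem_left _ _ ?_
  rw [hterm, monomial_mul]
  refine monomial_mem_pideal _ (i := j) ?_
  rw [Finsupp.add_apply, hu j, aux_symm_apply]
  exact hj

/-- Necessary condition: with `d_i = N_i p + r_i`, `0 < r_i ≤ p`, a set `Λ` of indices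
with `r_i < d_i` for `i ∈ Λ`, and `m = Σ N_i - |Λ| + 1`, if
`Σ_{i ∈ Λ} r_i ≤ (Σ (d_i - 1) - m p)/2`, then `A` fails to have the SLP. -/
theorem stmt11 {k : Type} [Field k] {p n : ℕ} (hp : p.Prime) [CharP k p]
    (d N r : Fin n → ℕ) (hdec : ∀ i, d i = N i * p + r i)
    (hr0 : ∀ i, 0 < r i) (hrp : ∀ i, r i ≤ p)
    (Λ : Finset (Fin n)) (hΛ : ∀ i ∈ Λ, r i < d i)
    (m : ℕ) (hm : (m : ℤ) = (∑ i, N i : ℕ) - Λ.card + 1)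
    (hcond : 2 * ∑ i ∈ Λ, r i + m * p ≤ ∑ i, (d i - 1)) :
    ¬ ∃ L : MvPolynomial (Fin n) k, L.IsHomogeneous 1 ∧
        ∀ m', 1 ≤ m' → ∀ i,
          maxRankOn ((Ideal.Quotient.mk (pideal k d) L) ^ m')
            (comp k d i) (comp k d (i + m')) := by
  classical
  rintro ⟨L, hL, hmax⟩
  have hp2 := hp.two_le
  have hd1 : ∀ i, 1 ≤ d i := fun i => by
    have := hr0 i; have := hdec i; omega
  have hNΛ : ∀ i ∈ Λ, 1 ≤ N i := by
    intro i hi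
    have h1 := hΛ i hi
    have h2 := hdec i
    by_contra h
    push_neg at h
    have h0 : N i = 0 := by omega
    rw [h0] at h2
    simp at h2
    omega
  have hcard : Λ.card ≤ ∑ i, N i := by
    calc Λ.card = ∑ i ∈ Λ, 1 := by simp
      _ ≤ ∑ i ∈ Λ, N i := Finset.sum_le_sum hNΛ
      _ ≤ ∑ i, N i := Finset.sum_le_sum_of_subset (Finset.subset_univ Λ)
  have hmn : m + Λ.card = (∑ i, N i) + 1 := by omega
  have hm1 : 1 ≤ m := by omega
  set A := ∑ i ∈ Λ, r i with hA
  set D := ∑ i, (d i - 1) with hD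
  -- exponent data
  set ga : Fin n → ℕ := fun i => if i ∈ Λ then r i else 0 with hga
  have hgasum : ∑ i, ga i = A := by
    rw [hga, hA, Finset.sum_ite_mem, Finset.univ_inter]
  have hga_le : ∀ i, ga i ≤ d i - 1 := by
    intro i
    show (if i ∈ Λ then r i else 0) ≤ d i - 1
    split_ifs with hi
    · have := hΛ i hi; omega
    · omega
  set cap : Fin n → ℕ := fun i => d i - 1 - ga i with hcapdef
  have hcap : ∀ i, ga i + cap i = d i - 1 := fun i => by
    have := hga_le i; simp only [hcapdef]; omega
  have hcapsum : A + ∑ i, cap i = D := by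
    have h1 : ∑ i, (ga i + cap i) = D := by
      rw [hD]; exact Finset.sum_congr rfl fun i _ => hcap i
    rw [Finset.sum_add_distrib, hgasum] at h1
    exact h1
  set T := D - 2 * A - m * p with hT
  have hTle : T ≤ ∑ i, cap i := by omega
  obtain ⟨w, hw, hwsum⟩ := exists_fill cap T hTle
  set i₀ := A + T with hi₀
  -- the three monomials
  set μ : MvPolynomial (Fin n) k := monomial (Finsupp.equivFunOnFinite.symm ga) 1 with hμ
  set F : MvPolynomial (Fin n) k :=
    monomial (Finsupp.equivFunOnFinite.symm fun i => ga i + w i) 1 with hF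
  set ν : MvPolynomial (Fin n) k := monomial (Finsupp.equivFunOnFinite.symm cap) 1 with hν
  have hkey : L ^ (m * p) * μ ∈ pideal k d := key_pow_mul_mem hp hdec hrp hmn hL
  have hmp1 : 1 ≤ m * p := Nat.one_le_iff_ne_zero.2 (Nat.mul_ne_zero (by omega) (by omega))
  -- homogeneity
  have hFhom : F.IsHomogeneous i₀ := by
    refine isHomogeneous_monomial _ ?_
    rw [aux_degree_fin]
    simp only [aux_symm_apply]
    rw [Finset.sum_add_distrib, hgasum, hwsum, hi₀]
  have hνhom : ν.IsHomogeneous (i₀ + m * p) := by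
    refine isHomogeneous_monomial _ ?_
    rw [aux_degree_fin]
    simp only [aux_symm_apply]
    omega
  have hFmem : (Ideal.Quotient.mk (pideal k d)) F ∈ comp k d i₀ := by
    simp only [comp, qcomp]
    exact Submodule.mem_map.2 ⟨F, (mem_homogeneousSubmodule _ _).2 hFhom, by
      simp [Ideal.Quotient.mkₐ_eq_mk]⟩
  have hνmem : (Ideal.Quotient.mk (pideal k d)) ν ∈ comp k d (i₀ + m * p) := by
    simp only [comp, qcomp]
    exact Submodule.mem_map.2 ⟨ν, (mem_homogeneousSubmodule _ _).2 hνhom, by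
      simp [Ideal.Quotient.mkₐ_eq_mk]⟩
  rcases hmax (m * p) hmp1 i₀ with hinj | hsurj
  · -- injectivity fails: F is a nonzero kernel element
    have h0 : (Ideal.Quotient.mk (pideal k d) L) ^ (m * p) *
        (Ideal.Quotient.mk (pideal k d)) F = 0 := by
      rw [← map_pow, ← map_mul, Ideal.Quotient.eq_zero_iff_mem]
      have hsplitF : L ^ (m * p) * F
          = (L ^ (m * p) * μ) * monomial (Finsupp.equivFunOnFinite.symm w) 1 := by
        rw [mul_assoc, hμ, hF, monomial_mul, mul_one, aux_symm_add]
      rw [hsplitF]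
      exact Ideal.mul_mem_right _ _ hkey
    have hF0 := hinj _ hFmem h0
    rw [Ideal.Quotient.eq_zero_iff_mem] at hF0
    have hco := coeff_eq_zero_of_mem_pideal (c := Finsupp.equivFunOnFinite.symm
      fun i => ga i + w i) (fun i => by
        have h1 := hcap i; have h2 := hw i; have h3 := hd1 i
        simp only [aux_symm_apply]; omega) hF0
    rw [hF, coeff_monomial, if_pos rfl] at hco
    exact one_ne_zero hco
  · -- surjectivity fails: ν is not in the image
    obtain ⟨fq, hfq, heq⟩ := hsurj _ hνmem
    simp only [comp, qcomp] at hfq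
    obtain ⟨ξ, hξhom, hξeq⟩ := Submodule.mem_map.1 hfq
    rw [AlgHom.toLinearMap_apply, Ideal.Quotient.mkₐ_eq_mk] at hξeq
    rw [← hξeq, ← map_pow, ← map_mul] at heq
    have hsub : L ^ (m * p) * ξ - ν ∈ pideal k d := by
      rw [← Ideal.Quotient.eq]
      exact heq
    have h1 : μ * (L ^ (m * p) * ξ - ν) ∈ pideal k d := Ideal.mul_mem_left _ _ hsub
    have h2 : μ * (L ^ (m * p) * ξ) ∈ pideal k d := by
      have : μ * (L ^ (m * p) * ξ) = (L ^ (m * p) * μ) * ξ := by ring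
      rw [this]
      exact Ideal.mul_mem_right _ _ hkey
    have h3 : μ * ν ∈ pideal k d := by
      have : μ * ν = μ * (L ^ (m * p) * ξ) - μ * (L ^ (m * p) * ξ - ν) := by ring
      rw [this]
      exact Ideal.sub_mem _ h2 h1
    have h4 : (monomial (Finsupp.equivFunOnFinite.symm fun i => ga i + cap i) (1:k))
        ∈ pideal k d := by
      rwa [hμ, hν, monomial_mul, mul_one, aux_symm_add] at h3
    have hco : coeff (Finsupp.equivFunOnFinite.symm fun i => ga i + cap i)
        (monomial (Finsupp.equivFunOnFinite.symm fun i => ga i + cap i) (1:k)) = 0 :=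
      coeff_eq_zero_of_mem_pideal (fun i => by
        have e1 := hcap i; have e2 := hd1 i
        simp only [aux_symm_apply]; omega) h4
    rw [coeff_monomial, if_pos rfl] at hco
    exact one_ne_zero hco
end

section
/- Let A = k[x_1,...,x_n]/(x_1^{d_1},...,x_n^{d_n}) with n ≥ 3, all d_i ≥ 2, and k a field of characteristic 2. Then A does not have the strong Lefschetz property. -/
open MvPolynomial

section Aux

variable {k : Type} [Field k] {N : ℕ}

lemma coeff_pideal_zero (d : Fin N → ℕ) (μ : Fin N →₀ ℕ) (hμ : ∀ l, μ l < d l)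
    {h : MvPolynomial (Fin N) k} (hh : h ∈ pideal k d) : coeff μ h = 0 := by
  have main : ∀ x ∈ pideal k d, ∀ q : MvPolynomial (Fin N) k, coeff μ (q * x) = 0 := by
    intro x hx
    refine Submodule.span_induction (p := fun x _ => ∀ q : MvPolynomial (Fin N) k,
      coeff μ (q * x) = 0) ?_ ?_ ?_ ?_ hx
    · rintro x ⟨l, rfl⟩ q
      show coeff μ (q * (X l ^ d l)) = 0
      rw [X_pow_eq_monomial, coeff_mul_monomial', if_neg]
      rw [Finsupp.single_le_iff]
      intro hc
      exact absurd (hμ l) (by omega)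
    · intro q; simp
    · intro a b _ _ ha hb q
      rw [mul_add, coeff_add, ha, hb, add_zero]
    · intro a x _ hx q
      rw [smul_eq_mul, ← mul_assoc, hx]
  simpa using main h hh 1

lemma X_pow_mem (d : Fin N → ℕ) (l : Fin N) {e : ℕ} (h : d l ≤ e) :
    (X l : MvPolynomial (Fin N) k) ^ e ∈ pideal k d := by
  have he : (X l : MvPolynomial (Fin N) k) ^ e = X l ^ d l * X l ^ (e - d l) := by
    rw [← pow_add]; congr 1; omega
  rw [he]
  exact Ideal.mul_mem_right _ _ (Ideal.subset_span ⟨l, rfl⟩)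

lemma degree_sum_univ (μ : Fin N →₀ ℕ) : μ.degree = ∑ l, μ l :=
  Finset.sum_subset (Finset.subset_univ _)
    (fun _ _ hx => Finsupp.notMem_support_iff.mp hx)

lemma single_of_degree_one (μ : Fin N →₀ ℕ) (h : μ.degree = 1) :
    ∃ i, μ = Finsupp.single i 1 := by
  rw [degree_sum_univ] at h
  obtain ⟨i, hi⟩ : ∃ i, μ i ≠ 0 := by
    by_contra hc
    push_neg at hc
    simp [hc] at h
  have h1 : μ i = 1 := by
    have hle1 : μ i ≤ ∑ l, μ l :=
      Finset.single_le_sum (fun _ _ => Nat.zero_le _) (Finset.mem_univ i)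
    omega
  refine ⟨i, ?_⟩
  ext l
  by_cases hl : l = i
  · subst hl; simp [h1]
  · have hle : μ l + μ i ≤ 1 := by
      have hs : ∑ x ∈ ({l, i} : Finset (Fin N)), μ x ≤ ∑ x, μ x :=
        Finset.sum_le_sum_of_subset (Finset.subset_univ _)
      rw [Finset.sum_pair hl] at hs
      omega
    have hμl : μ l = 0 := by omega
    rw [hμl, Finsupp.single_apply, if_neg (fun he => hl he.symm)]

lemma hom_one_eq_sum (L : MvPolynomial (Fin N) k) (hL : L.IsHomogeneous 1) :
    L = ∑ i : Fin N, C (coeff (Finsupp.single i 1) L) * X i := by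
  have hrhs : ∀ i : Fin N, C (coeff (Finsupp.single i 1) L) * X i
      = monomial (Finsupp.single i 1) (coeff (Finsupp.single i 1) L) := by
    intro i
    rw [← pow_one (X i : MvPolynomial (Fin N) k), X_pow_eq_monomial, C_mul_monomial, mul_one]
  have hdegs : ∀ i : Fin N, (Finsupp.single i 1 : Fin N →₀ ℕ).degree = 1 := by
    intro i
    rw [degree_sum_univ]
    simp [Finsupp.single_apply]
  apply MvPolynomial.ext
  intro μ
  rw [coeff_sum]
  by_cases hdeg : μ.degree = 1
  · obtain ⟨i₀, rfl⟩ := single_of_degree_one μ hdeg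
    rw [Finset.sum_eq_single i₀]
    · rw [hrhs, coeff_monomial, if_pos rfl]
    · intro b _ hb
      rw [hrhs, coeff_monomial, if_neg]
      intro hc
      exact hb (Finsupp.single_left_injective one_ne_zero hc)
    · intro hni; exact absurd (Finset.mem_univ i₀) hni
  · rw [hL.coeff_eq_zero hdeg]
    symm
    apply Finset.sum_eq_zero
    intro i _
    rw [hrhs, coeff_monomial, if_neg]
    intro hc
    rw [← hc] at hdeg
    exact hdeg (hdegs i)

lemma exists_exp (d : Fin N → ℕ) (j : Fin N) :
    ∀ t, t ≤ ∑ l ∈ Finset.univ.erase j, (d l - 1) →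
    ∃ b : Fin N → ℕ, b j = 0 ∧ (∀ l, l ≠ j → b l ≤ d l - 1) ∧
      ∑ l ∈ Finset.univ.erase j, b l = t := by
  intro t
  induction t with
  | zero => exact fun _ => ⟨fun _ => 0, rfl, fun _ _ => Nat.zero_le _, Finset.sum_const_zero⟩
  | succ t ih =>
    intro h
    obtain ⟨b, hbj, hble, hbsum⟩ := ih (by omega)
    obtain ⟨l, hle, hbl⟩ : ∃ l ∈ Finset.univ.erase j, b l < d l - 1 := by
      by_contra hc
      push_neg at hc
      have hsle : ∑ l ∈ Finset.univ.erase j, (d l - 1) ≤ ∑ l ∈ Finset.univ.erase j, b l :=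
        Finset.sum_le_sum (fun x hx => hc x hx)
      omega
    have hlj : l ≠ j := (Finset.mem_erase.mp hle).1
    refine ⟨Function.update b l (b l + 1), ?_, ?_, ?_⟩
    · rw [Function.update_of_ne (fun he => hlj he.symm)]
      exact hbj
    · intro x hx
      by_cases hxl : x = l
      · subst hxl
        rw [Function.update_self]
        omega
      · rw [Function.update_of_ne hxl]
        exact hble x hx
    · have h1 : ∑ x ∈ Finset.univ.erase j, Function.update b l (b l + 1) x
          = (b l + 1) + ∑ x ∈ (Finset.univ.erase j).erase l, b x := by
        rw [Finset.sum_update_of_mem hle, Finset.sdiff_singleton_eq_erase]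
      have h2 : b l + ∑ x ∈ (Finset.univ.erase j).erase l, b x = t := by
        rw [Finset.add_sum_erase _ _ hle, hbsum]
      omega

lemma mem_comp_of (d : Fin N → ℕ) (i : ℕ) (F : MvPolynomial (Fin N) k)
    (hF : F.IsHomogeneous i) : Ideal.Quotient.mk (pideal k d) F ∈ comp k d i := by
  simp only [comp, qcomp]
  refine Submodule.mem_map.mpr ⟨F, (mem_homogeneousSubmodule _ _).mpr hF, ?_⟩
  simp [Ideal.Quotient.mkₐ_eq_mk]

lemma mem_comp_elim (d : Fin N → ℕ) (i : ℕ) {x : MvPolynomial (Fin N) k ⧸ pideal k d}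
    (hx : x ∈ comp k d i) :
    ∃ F : MvPolynomial (Fin N) k, Ideal.Quotient.mk (pideal k d) F = x := by
  simp only [comp, qcomp] at hx
  obtain ⟨F, _, hFeq⟩ := Submodule.mem_map.mp hx
  refine ⟨F, ?_⟩
  rw [← hFeq]
  simp [Ideal.Quotient.mkₐ_eq_mk]

end Aux

/-- In characteristic 2, with `n ≥ 3` variables and all `d_i ≥ 2`,
`A` never has the strong Lefschetz property. -/
theorem stmt12 {k : Type} [Field k] [CharP k 2] {n : ℕ}
    (d : Fin (n + 3) → ℕ) (hd : ∀ i, 2 ≤ d i) :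
    ¬ ∃ L : MvPolynomial (Fin (n + 3)) k, L.IsHomogeneous 1 ∧
        ∀ m, 1 ≤ m → ∀ i,
          maxRankOn ((Ideal.Quotient.mk (pideal k d) L) ^ m)
            (comp k d i) (comp k d (i + m)) := by
  classical
  rintro ⟨L, hL, hSLP⟩
  -- `j` maximizes `d`
  obtain ⟨j, -, hj⟩ := Finset.exists_mem_eq_sup (Finset.univ : Finset (Fin (n+3)))
    ⟨0, Finset.mem_univ 0⟩ d
  have hjmax : ∀ i, d i ≤ d j := fun i => hj ▸ Finset.le_sup (Finset.mem_univ i)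
  set T : Finset (Fin (n+3)) :=
    Finset.univ.filter (fun i => i ≠ j ∧ coeff (Finsupp.single i 1) L ≠ 0) with hT
  set M : ℕ := T.sup d with hM
  set P : ℕ := 2 ^ Nat.clog 2 M with hP
  set EB : ℕ := ∑ l ∈ Finset.univ.erase j, (d l - 1) with hEB
  have hdj2 : 2 ≤ d j := hd j
  have hP1 : 1 ≤ P := Nat.one_le_two_pow
  have hMP : M ≤ P := Nat.le_pow_clog one_lt_two M
  have hPM : P ≤ max 1 (2 * M - 2) := by
    rcases le_or_gt M 1 with hM1 | hM1
    · have hclog : Nat.clog 2 M = 0 := Nat.clog_of_right_le_one hM1 2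
      rw [hP, hclog, pow_zero]
      exact le_max_left _ _
    · have h2 : 2 ^ (Nat.clog 2 M - 1) < M := Nat.pow_pred_clog_lt_self one_lt_two hM1
      have h1 : 0 < Nat.clog 2 M := Nat.clog_pos one_lt_two hM1
      have h3 : P = 2 * 2 ^ (Nat.clog 2 M - 1) := by
        rw [hP, ← pow_succ']
        congr 1
        omega
      omega
  have hMd : M ≤ d j := by
    rw [hM]
    exact Finset.sup_le (fun i _ => hjmax i)
  have hEB2 : 2 ≤ EB := by
    have hcard : (Finset.univ.erase j).card = n + 2 := by
      rw [Finset.card_erase_of_mem (Finset.mem_univ j)]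
      simp
    have hnsmul : (Finset.univ.erase j).card • 1 ≤ ∑ l ∈ Finset.univ.erase j, (d l - 1) :=
      Finset.card_nsmul_le_sum _ _ _ (fun x _ => by have := hd x; omega)
    rw [hcard, smul_eq_mul, mul_one] at hnsmul
    omega
  have hMEB : M ≤ EB := by
    rcases T.eq_empty_or_nonempty with hTe | hTne
    · rw [hM, hTe]
      simp
    · obtain ⟨i₀, hi₀T, hi₀⟩ := Finset.exists_mem_eq_sup T hTne d
      have hi₀T' := hi₀T
      rw [hT, Finset.mem_filter] at hi₀T'
      have hi₀j : i₀ ≠ j := hi₀T'.2.1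
      obtain ⟨l, hl1, hl2⟩ : ∃ l : Fin (n+3), l ≠ i₀ ∧ l ≠ j := by
        have hcompl : (({i₀, j} : Finset (Fin (n+3)))ᶜ).Nonempty := by
          rw [← Finset.card_pos, Finset.card_compl]
          have hci := Finset.card_insert_le i₀ ({j} : Finset (Fin (n+3)))
          have hcu : Fintype.card (Fin (n+3)) = n + 3 := Fintype.card_fin _
          simp only [Finset.card_singleton] at hci
          omega
        obtain ⟨l, hl⟩ := hcompl
        rw [Finset.mem_compl, Finset.mem_insert] at hl
        push_neg at hl
        exact ⟨l, hl.1, by simpa using hl.2⟩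
      have hsub : ({i₀, l} : Finset (Fin (n+3))) ⊆ Finset.univ.erase j := by
        intro x hx
        rw [Finset.mem_insert, Finset.mem_singleton] at hx
        rcases hx with rfl | rfl
        · exact Finset.mem_erase.mpr ⟨hi₀j, Finset.mem_univ _⟩
        · exact Finset.mem_erase.mpr ⟨hl2, Finset.mem_univ _⟩
      have hlesum : ∑ x ∈ ({i₀, l} : Finset (Fin (n+3))), (d x - 1)
          ≤ ∑ x ∈ Finset.univ.erase j, (d x - 1) :=
        Finset.sum_le_sum_of_subset hsub
      rw [Finset.sum_pair (fun he => hl1 he.symm)] at hlesum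
      have hd₀ := hd i₀
      have hdl := hd l
      rw [hM, hi₀]
      omega
  -- choose the multiple `s` of `P`
  set lo : ℕ := d j + 1 - EB with hlo
  set q : ℕ := (lo + P - 1) / P with hq
  set K : ℕ := max 1 q with hK
  set s : ℕ := P * K with hs
  obtain ⟨A, hA⟩ : ∃ A, A = P * q := ⟨_, rfl⟩
  obtain ⟨B, hB⟩ : ∃ B, B = (lo + P - 1) % P := ⟨_, rfl⟩
  have hdm : A + B = lo + P - 1 := by
    rw [hA, hB, hq]
    exact Nat.div_add_mod _ _
  have hBP : B < P := by
    rw [hB]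
    exact Nat.mod_lt _ (by omega)
  have hsfacts : lo ≤ s ∧ s ≤ d j + EB - 1 ∧ 1 ≤ s := by
    rcases Nat.eq_zero_or_pos q with h0 | h0
    · have hK1 : K = 1 := by rw [hK, h0]; omega
      have hsP : s = P := by rw [hs, hK1, mul_one]
      rw [h0, mul_zero] at hA
      omega
    · have hK1 : K = q := by rw [hK]; exact max_eq_right h0
      have hsA : s = A := by rw [hs, hK1, hA]
      have hPA : P ≤ A := by rw [hA]; exact Nat.le_mul_of_pos_right P h0
      omega
  obtain ⟨hslo, hshi, hs1⟩ := hsfacts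
  set i₀ : ℕ := d j - s with hi₀def
  set c' : ℕ := min (s - 1) (d j - 1) with hc'def
  set t : ℕ := i₀ + s - c' with htdef
  have hc's : c' < s := by omega
  have hc'd : c' < d j := by omega
  have htEB : t ≤ EB := by omega
  have hsum : c' + t = i₀ + s := by omega
  have hi₀d : i₀ < d j := by omega
  have hdjsi : d j ≤ s + i₀ := by omega
  -- the key congruence : L ^ s ≡ c_j ^ s X_j ^ s  mod I
  haveI hfact : Fact (Nat.Prime 2) := ⟨Nat.prime_two⟩
  have hLsum := hom_one_eq_sum L hL
  have hLP : L ^ P = ∑ i : Fin (n+3), C (coeff (Finsupp.single i 1) L ^ P) * X i ^ P := by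
    conv_lhs => rw [hLsum]
    rw [hP, sum_pow_char_pow]
    apply Finset.sum_congr rfl
    intro i _
    rw [mul_pow, map_pow]
  have hmkLP : Ideal.Quotient.mk (pideal k d) (L ^ P)
      = Ideal.Quotient.mk (pideal k d) (C (coeff (Finsupp.single j 1) L ^ P) * X j ^ P) := by
    rw [hLP, map_sum]
    apply Finset.sum_eq_single_of_mem j (Finset.mem_univ j)
    intro b _ hbj
    by_cases hcb : coeff (Finsupp.single b 1) L = 0
    · rw [hcb, zero_pow (by omega : P ≠ 0), map_zero, zero_mul, map_zero]
    · have hbT : b ∈ T := by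
        rw [hT, Finset.mem_filter]
        exact ⟨Finset.mem_univ b, hbj, hcb⟩
      have hdbP : d b ≤ P := by
        have hsup : d b ≤ M := by rw [hM]; exact Finset.le_sup hbT
        exact hsup.trans hMP
      exact Ideal.Quotient.eq_zero_iff_mem.mpr
        (Ideal.mul_mem_left _ _ (X_pow_mem d b hdbP))
  have hkey : (Ideal.Quotient.mk (pideal k d) L) ^ s
      = Ideal.Quotient.mk (pideal k d) (C (coeff (Finsupp.single j 1) L ^ s) * X j ^ s) := by
    have h1 : (Ideal.Quotient.mk (pideal k d) L) ^ s
        = (Ideal.Quotient.mk (pideal k d) (L ^ P)) ^ K := by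
      rw [map_pow, ← pow_mul, ← hs]
    rw [h1, hmkLP, ← map_pow]
    congr 1
    rw [mul_pow, map_pow, ← pow_mul, ← pow_mul, ← hs, ← map_pow]
  -- instantiate the SLP hypothesis
  have H : (∀ f ∈ comp k d i₀, (Ideal.Quotient.mk (pideal k d) L) ^ s * f = 0 → f = 0) ∨
      (∀ g ∈ comp k d (i₀ + s), ∃ f ∈ comp k d i₀,
        (Ideal.Quotient.mk (pideal k d) L) ^ s * f = g) :=
    hSLP s hs1 i₀
  rcases H with Hinj | Hsurj
  · -- multiplication by L ^ s kills X_j ^ i₀, which is nonzero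
    have hmem := mem_comp_of d i₀ ((X j : MvPolynomial (Fin (n+3)) k) ^ i₀) (isHomogeneous_X_pow j i₀)
    have hzero : (Ideal.Quotient.mk (pideal k d) L) ^ s
        * Ideal.Quotient.mk (pideal k d) (X j ^ i₀) = 0 := by
      rw [hkey, ← map_mul]
      refine Ideal.Quotient.eq_zero_iff_mem.mpr ?_
      have he : C (coeff (Finsupp.single j 1) L ^ s) * X j ^ s * X j ^ i₀
          = C (coeff (Finsupp.single j 1) L ^ s) * X j ^ (s + i₀) := by
        rw [mul_assoc, ← pow_add]
      rw [he]
      exact Ideal.mul_mem_left _ _ (X_pow_mem d j hdjsi)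
    have h0 := Hinj _ hmem hzero
    rw [Ideal.Quotient.eq_zero_iff_mem] at h0
    have hbnd : ∀ l, (Finsupp.single j i₀ : Fin (n+3) →₀ ℕ) l < d l := by
      intro l
      rw [Finsupp.single_apply]
      by_cases hlj : j = l
      · subst hlj
        rw [if_pos rfl]
        exact hi₀d
      · rw [if_neg hlj]
        have := hd l
        omega
    have hcoeff := coeff_pideal_zero d (Finsupp.single j i₀) hbnd h0
    rw [X_pow_eq_monomial, coeff_monomial, if_pos rfl] at hcoeff
    exact one_ne_zero hcoeff
  · -- the monomial X_j^{c'} * (monomial of degree t off j) is not in the image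
    obtain ⟨b, hbj0, hble, hbsum⟩ := exists_exp d j t (by rw [← hEB]; exact htEB)
    set μ : Fin (n+3) →₀ ℕ :=
      Finsupp.equivFunOnFinite.symm (fun l => if l = j then c' else b l) with hμ
    have hμapp : ∀ l, μ l = if l = j then c' else b l := fun l => rfl
    have hμlt : ∀ l, μ l < d l := by
      intro l
      rw [hμapp]
      by_cases hlj : l = j
      · subst hlj
        rw [if_pos rfl]
        exact hc'd
      · rw [if_neg hlj]
        have := hble l hlj
        have := hd l
        omega
    have hμdeg : μ.degree = i₀ + s := by
      rw [degree_sum_univ, ← Finset.add_sum_erase _ _ (Finset.mem_univ j)]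
      have h1 : μ j = c' := by rw [hμapp, if_pos rfl]
      have h2 : ∑ l ∈ Finset.univ.erase j, μ l = t := by
        rw [← hbsum]
        apply Finset.sum_congr rfl
        intro x hx
        rw [hμapp, if_neg (Finset.mem_erase.mp hx).1]
      rw [h1, h2]
      exact hsum
    have hgmem := mem_comp_of d (i₀ + s) (monomial μ 1) (isHomogeneous_monomial (1:k) hμdeg)
    obtain ⟨f', hf'mem, hf'⟩ := Hsurj _ hgmem
    obtain ⟨F, hFeq⟩ := mem_comp_elim d i₀ hf'mem
    rw [hkey, ← hFeq, ← map_mul] at hf'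
    have hsubI : C (coeff (Finsupp.single j 1) L ^ s) * X j ^ s * F - monomial μ 1
        ∈ pideal k d := (Ideal.Quotient.mk_eq_mk_iff_sub_mem _ _).mp hf'
    have h0 := coeff_pideal_zero d μ hμlt hsubI
    have hnle : ¬ Finsupp.single j s ≤ μ := by
      rw [Finsupp.single_le_iff, hμapp, if_pos rfl]
      omega
    rw [coeff_sub, coeff_monomial, if_pos rfl, mul_assoc, coeff_C_mul,
      X_pow_eq_monomial, coeff_monomial_mul', if_neg hnle, mul_zero] at h0
    simp at h0
end
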